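/- arXiv:1701.05597 — 7 statements merged into one kernel-verified Lean document; each statement's English description precedes it below -/
import Mathlib

section
/- Let q, h ≥ 0 and t ≥ 1 be integers. Let (T', r) be a rooted tree in which every path from the root r to a leaf has length exactly h and every non-leaf vertex has exactly qt children (a uniform (qt)-ary tree of height h). Let φ be a map from the set of leaves of T' to {1, ..., q}. Then there is a subtree T of T' containing r such that (T, r) is a uniform t-ary tree of height h, and some x ∈ {1, ..., q} satisfies φ(u) = x for every leaf u of T. -/
/-- `u` is a child of `v` in the tree `G` rooted at `r`. -/
def IsChild {V : Type} (G : SimpleGraph V) (r v u : V) : Prop :=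
  G.Adj v u ∧ G.dist r u = G.dist r v + 1

/-- `v` is a leaf of the rooted tree `(G, r)`: it has no children. -/
def IsRootedLeaf {V : Type} (G : SimpleGraph V) (r v : V) : Prop :=
  ∀ u, ¬ IsChild G r v u

/-- `(G, r)` is a uniform `t`-ary tree of height `h`: a tree in which every leaf is at
distance `h` from the root and every non-leaf has exactly `t` children. -/
def IsUniformTree {V : Type} (G : SimpleGraph V) (r : V) (t h : ℕ) : Prop :=
  G.IsTree ∧ (∀ v, IsRootedLeaf G r v → G.dist r v = h) ∧
    (∀ v, ¬ IsRootedLeaf G r v → {u | IsChild G r v u}.ncard = t)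

namespace TreeRamseyAux

open SimpleGraph

variable {V : Type} {G : SimpleGraph V} {r u v w : V}

lemma dist_le_of_mem_support {p : G.Walk r w} (hx : u ∈ p.support) :
    G.dist r u ≤ p.length := by
  classical
  exact le_trans (SimpleGraph.dist_le (p.takeUntil u hx)) (p.length_takeUntil_le hx)

lemma exists_isPath_length_dist (hc : G.Connected) (u v : V) :
    ∃ p : G.Walk u v, p.IsPath ∧ p.length = G.dist u v := by
  classical
  obtain ⟨p, hp⟩ := (hc u v).exists_walk_length_eq_dist
  refine ⟨p.bypass, p.bypass_isPath, le_antisymm ?_ (SimpleGraph.dist_le _)⟩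
  calc p.bypass.length ≤ p.length := p.length_bypass_le
    _ = G.dist u v := hp

lemma concat_isPath {p : G.Walk u v} (hp : p.IsPath) (h : G.Adj v w) (hw : w ∉ p.support) :
    (p.concat h).IsPath := by
  rw [← SimpleGraph.Walk.isPath_reverse_iff, SimpleGraph.Walk.reverse_concat]
  exact hp.reverse.cons (by simpa [SimpleGraph.Walk.support_reverse] using hw)

lemma dist_le_succ_of_adj (hc : G.Connected) (h : G.Adj v u) :
    G.dist r u ≤ G.dist r v + 1 := by
  obtain ⟨p, -, hl⟩ := exists_isPath_length_dist hc r v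
  have := SimpleGraph.dist_le (p.concat h)
  rwa [SimpleGraph.Walk.length_concat, hl] at this

lemma tree_adj_dist_ne (hT : G.IsTree) (huv : G.Adj v u) :
    G.dist r u ≠ G.dist r v := by
  classical
  intro he
  obtain ⟨pv, hpv, hlv⟩ := exists_isPath_length_dist hT.isConnected r v
  obtain ⟨pu, hpu, hlu⟩ := exists_isPath_length_dist hT.isConnected r u
  have hu_not : u ∉ pv.support := by
    intro hmem
    have h1 : (pv.takeUntil u hmem).length ≤ pv.length := pv.length_takeUntil_le hmem
    have h2 : G.dist r u ≤ (pv.takeUntil u hmem).length := SimpleGraph.dist_le _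
    have h3 := congrArg SimpleGraph.Walk.length (pv.take_spec hmem)
    rw [SimpleGraph.Walk.length_append] at h3
    have h4 : (pv.dropUntil u hmem).length = 0 := by omega
    exact huv.ne' (SimpleGraph.Walk.eq_of_length_eq_zero h4)
  have hqp : (pv.concat huv).IsPath := concat_isPath hpv huv hu_not
  have := (hT.existsUnique_path r u).unique hqp hpu
  have hlen := congrArg SimpleGraph.Walk.length this
  rw [SimpleGraph.Walk.length_concat] at hlen
  omega

lemma tree_adj_dist_cases (hT : G.IsTree) (huv : G.Adj v u) :
    G.dist r u = G.dist r v + 1 ∨ G.dist r v = G.dist r u + 1 := by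
  have h1 := dist_le_succ_of_adj (r := r) hT.isConnected huv
  have h2 := dist_le_succ_of_adj (r := r) hT.isConnected huv.symm
  have h3 := tree_adj_dist_ne (r := r) hT huv
  omega

lemma parent_unique (hT : G.IsTree) {k : ℕ} (hv : G.dist r v = k + 1)
    {w₁ w₂ : V} (h1 : G.Adj w₁ v) (hd1 : G.dist r w₁ = k)
    (h2 : G.Adj w₂ v) (hd2 : G.dist r w₂ = k) : w₁ = w₂ := by
  classical
  obtain ⟨q1, hq1, hl1⟩ := exists_isPath_length_dist hT.isConnected r w₁
  obtain ⟨q2, hq2, hl2⟩ := exists_isPath_length_dist hT.isConnected r w₂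
  have hv1 : v ∉ q1.support := fun hm => by
    have := dist_le_of_mem_support hm; omega
  have hv2 : v ∉ q2.support := fun hm => by
    have := dist_le_of_mem_support hm; omega
  have hc1 : (q1.concat h1).IsPath := concat_isPath hq1 h1 hv1
  have hc2 : (q2.concat h2).IsPath := concat_isPath hq2 h2 hv2
  have heq := (hT.existsUnique_path r v).unique hc1 hc2
  have heq2 := congrArg SimpleGraph.Walk.reverse heq
  rw [SimpleGraph.Walk.reverse_concat, SimpleGraph.Walk.reverse_concat] at heq2
  have hs := congrArg SimpleGraph.Walk.support heq2
  rw [SimpleGraph.Walk.support_cons, SimpleGraph.Walk.support_cons,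
    q1.reverse.support_eq_cons, q2.reverse.support_eq_cons] at hs
  injection hs with ha hs'
  injection hs' with hb hs''

lemma exists_good {q t : ℕ} (hq : 1 ≤ q) (ht : 1 ≤ t) (C : Set V) (hC : C.ncard = q * t)
    (f : V → Fin q) :
    ∃ p : Fin q × Finset V, ↑p.2 ⊆ C ∧ p.2.card = t ∧ ∀ u ∈ p.2, f u = p.1 := by
  classical
  have hfin : C.Finite :=
    Set.finite_of_ncard_ne_zero (by rw [hC]; exact Nat.mul_ne_zero (by omega) (by omega))
  have hcard : hfin.toFinset.card = q * t := by
    rw [← Set.ncard_eq_toFinset_card C hfin]; exact hC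
  haveI : Nonempty (Fin q) := ⟨⟨0, hq⟩⟩
  obtain ⟨x, -, hx⟩ := Finset.exists_le_card_fiber_of_mul_le_card_of_maps_to
    (s := hfin.toFinset) (t := (Finset.univ : Finset (Fin q))) (f := f)
    (fun a _ => Finset.mem_univ _) Finset.univ_nonempty
    (by rw [hcard, Finset.card_univ, Fintype.card_fin])
  obtain ⟨D, hD, hDcard⟩ := Finset.exists_subset_card_eq hx
  refine ⟨(x, D), ?_, hDcard, fun u hu => ?_⟩
  · intro u hu
    have := hD hu
    simp only [Finset.mem_filter, Set.Finite.mem_toFinset] at this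
    exact this.1
  · have := hD hu
    simp only [Finset.mem_filter] at this
    exact this.2

open Classical in
/-- `pick q t φ G r n v = (colour, selected children)` where `n` is the remaining height. -/
noncomputable def pick (q t : ℕ) (φ : V → Fin q) (G : SimpleGraph V) (r : V) :
    ℕ → V → Fin q × Finset V
  | 0 => fun v => (φ v, ∅)
  | n + 1 => fun v =>
      if hx : ∃ p : Fin q × Finset V, ↑p.2 ⊆ {u | IsChild G r v u} ∧ p.2.card = t ∧
          ∀ u ∈ p.2, (pick q t φ G r n u).1 = p.1
      then hx.choose else (φ v, ∅)

lemma pick_zero (q t : ℕ) (φ : V → Fin q) (G : SimpleGraph V) (r : V) (v : V) :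
    pick q t φ G r 0 v = (φ v, ∅) := rfl

lemma pick_succ_spec {q t : ℕ} (hq : 1 ≤ q) (ht : 1 ≤ t) (φ : V → Fin q)
    (G : SimpleGraph V) (r : V) (n : ℕ) (v : V)
    (hv : {u | IsChild G r v u}.ncard = q * t) :
    ↑(pick q t φ G r (n+1) v).2 ⊆ {u | IsChild G r v u} ∧
    (pick q t φ G r (n+1) v).2.card = t ∧
    ∀ u ∈ (pick q t φ G r (n+1) v).2,
      (pick q t φ G r n u).1 = (pick q t φ G r (n+1) v).1 := by
  classical
  have hx : ∃ p : Fin q × Finset V, ↑p.2 ⊆ {u | IsChild G r v u} ∧ p.2.card = t ∧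
      ∀ u ∈ p.2, (pick q t φ G r n u).1 = p.1 :=
    exists_good hq ht _ hv _
  have hrw : pick q t φ G r (n+1) v = hx.choose := by
    rw [pick]
    exact dif_pos hx
  rw [hrw]
  exact hx.choose_spec

/-- The selected levels of the subtree. -/
noncomputable def lvl (q t : ℕ) (φ : V → Fin q) (G : SimpleGraph V) (r : V) (h : ℕ) :
    ℕ → Set V
  | 0 => {r}
  | k + 1 => {u | ∃ v ∈ lvl q t φ G r h k, u ∈ (pick q t φ G r (h - k) v).2}

lemma ncard_subtype_mem {S : Set V} (D : Finset V) (hD : ↑D ⊆ S) :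
    {u : S | u.1 ∈ D}.ncard = D.card := by
  classical
  have himg : Subtype.val '' {u : S | u.1 ∈ D} = ↑D := by
    ext x
    constructor
    · rintro ⟨u, hu, rfl⟩; exact hu
    · intro hx; exact ⟨⟨x, hD hx⟩, hx, rfl⟩
  rw [← Set.ncard_coe_finset, ← himg, Set.ncard_image_of_injective _ Subtype.val_injective]

lemma induce_adj_iff {S : Set V} (a b : S) : (G.induce S).Adj a b ↔ G.Adj a.1 b.1 := by
  simp

end TreeRamseyAux

open TreeRamseyAux SimpleGraph

/-- Theorem 5.1, treeramsey: if `(T', r)` is a uniform `(qt)`-ary tree of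
height `h` and `φ` assigns to each leaf of `T'` a colour in `Fin q`, then there is a subtree
`T` of `T'` containing `r` which is a uniform `t`-ary tree of height `h` all of whose leaves
get the same colour. -/
theorem stmt_0 {V : Type} (q h t : ℕ) (ht : 1 ≤ t)
    (G' : SimpleGraph V) (r : V) (hT' : IsUniformTree G' r (q * t) h)
    (φ : V → Fin q) :
    ∃ (S : Set V) (hr : r ∈ S),
      IsUniformTree (G'.induce S) ⟨r, hr⟩ t h ∧
      ∃ x : Fin q, ∀ u : S, IsRootedLeaf (G'.induce S) ⟨r, hr⟩ u → φ u = x := by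
  classical
  obtain ⟨hTree, hLeafDist, hChildCount⟩ := hT'
  rcases Nat.eq_zero_or_pos q with rfl | hq
  · exact (φ r).elim0
  set L := lvl q t φ G' r h with hLdef
  have lvl0 : L 0 = {r} := rfl
  have lvlS : ∀ k, L (k+1) = {u | ∃ v ∈ L k, u ∈ (pick q t φ G' r (h - k) v).2} :=
    fun k => rfl
  -- (A) every vertex of level k is at distance k from the root
  have A : ∀ k, k ≤ h → ∀ v ∈ L k, G'.dist r v = k := by
    intro k
    induction k with
    | zero =>
      intro _ v hv
      rw [lvl0, Set.mem_singleton_iff] at hv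
      subst hv
      exact SimpleGraph.dist_self
    | succ k ih =>
      intro hk v hv
      rw [lvlS, Set.mem_setOf_eq] at hv
      obtain ⟨w, hw, hsel⟩ := hv
      have hdw := ih (by omega) w hw
      have hnl : ¬ IsRootedLeaf G' r w := by
        intro hl
        have := hLeafDist w hl
        omega
      have hcw := hChildCount w hnl
      have hidx : h - k = (h - (k+1)) + 1 := by omega
      rw [hidx] at hsel
      have hspec := pick_succ_spec hq ht φ G' r (h - (k+1)) w hcw
      have hchild : IsChild G' r w v := hspec.1 hsel
      rw [hchild.2, hdw]
  -- (B) the selection spec at each internal vertex of the subtree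
  have B : ∀ k, k + 1 ≤ h → ∀ w ∈ L k,
      ↑(pick q t φ G' r ((h - (k+1)) + 1) w).2 ⊆ {u | IsChild G' r w u} ∧
      (pick q t φ G' r ((h - (k+1)) + 1) w).2.card = t ∧
      ∀ u ∈ (pick q t φ G' r ((h - (k+1)) + 1) w).2,
        (pick q t φ G' r (h - (k+1)) u).1 = (pick q t φ G' r ((h - (k+1)) + 1) w).1 := by
    intro k hk w hw
    have hdw := A k (by omega) w hw
    have hnl : ¬ IsRootedLeaf G' r w := by
      intro hl
      have := hLeafDist w hl
      omega
    exact pick_succ_spec hq ht φ G' r (h - (k+1)) w (hChildCount w hnl)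
  -- (C) colour propagation
  have C : ∀ k, k ≤ h → ∀ v ∈ L k,
      (pick q t φ G' r (h - k) v).1 = (pick q t φ G' r h r).1 := by
    intro k
    induction k with
    | zero =>
      intro _ v hv
      rw [lvl0, Set.mem_singleton_iff] at hv
      subst hv
      rw [Nat.sub_zero]
    | succ k ih =>
      intro hk v hv
      rw [lvlS, Set.mem_setOf_eq] at hv
      obtain ⟨w, hw, hsel⟩ := hv
      have hidx : h - k = (h - (k+1)) + 1 := by omega
      rw [hidx] at hsel
      have hspec := B k hk w hw
      have := hspec.2.2 v hsel
      rw [this, ← hidx]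
      exact ih (by omega) w hw
  -- the vertex set
  set S : Set V := {v | ∃ k, k ≤ h ∧ v ∈ L k} with hSdef
  have hrS : r ∈ S := ⟨0, by omega, by rw [lvl0]; exact rfl⟩
  set r' : S := ⟨r, hrS⟩ with hr'def
  -- selected children lie in the next level hence in S
  have sel_mem : ∀ k, k + 1 ≤ h → ∀ w ∈ L k,
      ∀ u ∈ (pick q t φ G' r ((h - (k+1)) + 1) w).2, u ∈ L (k+1) := by
    intro k hk w hw u hu
    rw [lvlS, Set.mem_setOf_eq]
    refine ⟨w, hw, ?_⟩
    have hidx : h - k = (h - (k+1)) + 1 := by omega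
    rw [hidx]
    exact hu
  -- adjacency in the induced graph
  have adj_ind : ∀ (a b : S), G'.Adj a.1 b.1 → (G'.induce S).Adj a b := by
    intro a b hab
    rw [induce_adj_iff]
    exact hab
  have adj_of_ind : ∀ (a b : S), (G'.induce S).Adj a b → G'.Adj a.1 b.1 := by
    intro a b hab
    rwa [induce_adj_iff] at hab
  -- (W) walks in the induced graph from the root, of length k, to each level-k vertex
  have W : ∀ k, k ≤ h → ∀ v : S, v.1 ∈ L k →
      ∃ p : (G'.induce S).Walk r' v, p.length = k := by
    intro k
    induction k with
    | zero =>
      intro _ v hv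
      rw [lvl0, Set.mem_singleton_iff] at hv
      have : v = r' := Subtype.ext hv
      subst this
      exact ⟨SimpleGraph.Walk.nil, rfl⟩
    | succ k ih =>
      intro hk v hv
      rw [lvlS, Set.mem_setOf_eq] at hv
      obtain ⟨w, hw, hsel⟩ := hv
      have hidx : h - k = (h - (k+1)) + 1 := by omega
      rw [hidx] at hsel
      have hwS : w ∈ S := ⟨k, by omega, hw⟩
      obtain ⟨p, hp⟩ := ih (by omega) ⟨w, hwS⟩ hw
      have hadj : G'.Adj w v.1 := ((B k hk w hw).1 hsel).1
      refine ⟨p.concat (adj_ind ⟨w, hwS⟩ v hadj), ?_⟩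
      rw [SimpleGraph.Walk.length_concat, hp]
  -- reachability in the induced graph
  have Reach : ∀ v : S, (G'.induce S).Reachable r' v := by
    intro v
    obtain ⟨k, hk, hv⟩ := v.2
    obtain ⟨p, -⟩ := W k hk v hv
    exact ⟨p⟩
  -- distances in the induced graph agree with levels
  have Dist : ∀ k, k ≤ h → ∀ v : S, v.1 ∈ L k → (G'.induce S).dist r' v = k := by
    intro k hk v hv
    obtain ⟨p, hp⟩ := W k hk v hv
    have hub : (G'.induce S).dist r' v ≤ k := by
      have := SimpleGraph.dist_le p
      omega
    have hlb : k ≤ (G'.induce S).dist r' v := by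
      obtain ⟨p', hp'⟩ := (Reach v).exists_walk_length_eq_dist
      have hmap := SimpleGraph.dist_le (p'.map (SimpleGraph.Embedding.induce S).toHom)
      rw [SimpleGraph.Walk.length_map, hp'] at hmap
      have hdv := A k hk v.1 hv
      calc k = G'.dist r v.1 := hdv.symm
        _ ≤ (G'.induce S).dist r' v := hmap
    omega
  -- each element of S lies in exactly one level, namely its distance
  have lvl_unique : ∀ (x : V) (k j : ℕ), k ≤ h → j ≤ h → x ∈ L k → x ∈ L j → k = j := by
    intro x k j hk hj hxk hxj
    have := A k hk x hxk
    have := A j hj x hxj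
    omega
  -- characterization of children in the induced subtree
  have childchar : ∀ k, k ≤ h → ∀ w : S, w.1 ∈ L k → ∀ u : S,
      (IsChild (G'.induce S) r' w u ↔
        k + 1 ≤ h ∧ u.1 ∈ (pick q t φ G' r ((h - (k+1)) + 1) w.1).2) := by
    intro k hk w hw u
    constructor
    · rintro ⟨hadj, hdist⟩
      obtain ⟨j, hj, hu⟩ := u.2
      have hdu := Dist j hj u hu
      have hdw := Dist k hk w hw
      have hjk : j = k + 1 := by omega
      subst hjk
      refine ⟨hj, ?_⟩
      have hu' := hu
      rw [lvlS, Set.mem_setOf_eq] at hu'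
      obtain ⟨w₂, hw₂, hsel₂⟩ := hu'
      have hidx : h - k = (h - (k+1)) + 1 := by omega
      rw [hidx] at hsel₂
      have hchild₂ : IsChild G' r w₂ u.1 := (B k hj w₂ hw₂).1 hsel₂
      have hduG : G'.dist r u.1 = k + 1 := A (k+1) hj u.1 hu
      have hdw₂ : G'.dist r w₂ = k := A k (by omega) w₂ hw₂
      have hdwG : G'.dist r w.1 = k := A k hk w.1 hw
      have : w₂ = w.1 :=
        parent_unique hTree hduG hchild₂.1 hdw₂ (adj_of_ind w u hadj) hdwG
      rw [← this]
      exact hsel₂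
    · rintro ⟨hk1, hsel⟩
      have hchild : IsChild G' r w.1 u.1 := (B k hk1 w.1 hw).1 hsel
      have huL : u.1 ∈ L (k+1) := sel_mem k hk1 w.1 hw u.1 hsel
      refine ⟨adj_ind w u hchild.1, ?_⟩
      rw [Dist (k+1) hk1 u huL, Dist k hk w hw]
  -- leaf characterization
  have leafchar : ∀ k, k ≤ h → ∀ w : S, w.1 ∈ L k →
      (IsRootedLeaf (G'.induce S) r' w ↔ k = h) := by
    intro k hk w hw
    constructor
    · intro hl
      by_contra hkh
      have hk1 : k + 1 ≤ h := by omega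
      have hcard := (B k hk1 w.1 hw).2.1
      have hne : (pick q t φ G' r ((h - (k+1)) + 1) w.1).2.Nonempty := by
        rw [← Finset.card_pos, hcard]; omega
      obtain ⟨u, hu⟩ := hne
      have huS : u ∈ S := ⟨k+1, hk1, sel_mem k hk1 w.1 hw u hu⟩
      exact hl ⟨u, huS⟩ ((childchar k hk w hw ⟨u, huS⟩).2 ⟨hk1, hu⟩)
    · intro hkh u hu
      have := (childchar k hk w hw u).1 hu
      omega
  -- the induced graph is a tree
  have hConn : (G'.induce S).Connected := by
    rw [SimpleGraph.connected_iff]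
    exact ⟨fun a b => (Reach a).symm.trans (Reach b), ⟨r'⟩⟩
  have hAcyc : (G'.induce S).IsAcyclic := by
    intro v c hc
    exact hTree.IsAcyclic (c.map (SimpleGraph.Embedding.induce S).toHom)
      (hc.map Subtype.val_injective)
  refine ⟨S, hrS, ⟨⟨hConn, hAcyc⟩, ?_, ?_⟩, (pick q t φ G' r h r).1, ?_⟩
  · -- leaves at distance h
    intro v hl
    obtain ⟨k, hk, hv⟩ := v.2
    have : k = h := (leafchar k hk v hv).1 hl
    subst this
    exact Dist k hk v hv
  · -- non-leaves have exactly t children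
    intro v hnl
    obtain ⟨k, hk, hv⟩ := v.2
    have hkh : k ≠ h := fun he => hnl ((leafchar k hk v hv).2 he)
    have hk1 : k + 1 ≤ h := by omega
    have hset : {u : S | IsChild (G'.induce S) r' v u} =
        {u : S | u.1 ∈ (pick q t φ G' r ((h - (k+1)) + 1) v.1).2} := by
      ext u
      rw [Set.mem_setOf_eq, Set.mem_setOf_eq, childchar k hk v hv u]
      exact ⟨fun hx => hx.2, fun hx => ⟨hk1, hx⟩⟩
    rw [hset, ncard_subtype_mem _ (fun u hu => show u ∈ S from ⟨k+1, hk1, sel_mem k hk1 v.1 hv u hu⟩)]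
    exact (B k hk1 v.1 hv).2.1
  · -- all leaves have colour x
    intro u hl
    obtain ⟨k, hk, hu⟩ := u.2
    have : k = h := (leafchar k hk u hu).1 hl
    subst this
    have hc := C k hk u.1 hu
    rw [Nat.sub_self] at hc
    rw [← hc, pick_zero]
end

section
/- Let G be a connected graph, let v ∈ V(G), and let x_1, ..., x_k be distinct vertices each at distance exactly d ≥ 1 from v. For 1 ≤ i ≤ k let P_i be a shortest path from v to x_i. Suppose that for all distinct i, j, every vertex of P_i has distance at least d from x_j. Then the paths P_i are pairwise disjoint except for v, and every edge of G between V(P_i) \ {v} and V(P_j) \ {v} (for i ≠ j) joins two neighbours of v. -/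
open SimpleGraph

private lemma aux_dist {V : Type} [DecidableEq V] {G : SimpleGraph V} {v x : V} (p : G.Walk v x)
    (u : V) (h : u ∈ p.support) :
    G.dist u x + (p.takeUntil u h).length ≤ p.length := by
  have h1 := congrArg SimpleGraph.Walk.length (p.take_spec h)
  rw [SimpleGraph.Walk.length_append] at h1
  have h2 := SimpleGraph.dist_le (p.dropUntil u h)
  omega

/-- Let `v` be a vertex of a connected graph `G`, let `x 1, …, x k` be distinct
vertices at distance exactly `d ≥ 1` from `v`, and let `P i` be a shortest path from `v` to
`x i`. If every vertex of `P i` is at distance at least `d` from `x j` for all `i ≠ j`, then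
the paths are pairwise disjoint except for `v`, and every edge between `P i \ {v}` and
`P j \ {v}` joins two neighbours of `v`. -/
theorem stmt_3 {V : Type} (G : SimpleGraph V) (hconn : G.Connected)
    (v : V) (k d : ℕ) (hd : 1 ≤ d)
    (x : Fin k → V) (hinj : Function.Injective x)
    (hdist : ∀ i, G.dist v (x i) = d)
    (P : ∀ i, G.Walk v (x i))
    (hpath : ∀ i, (P i).IsPath) (hlen : ∀ i, (P i).length = d)
    (hfar : ∀ i j, i ≠ j → ∀ u ∈ (P i).support, d ≤ G.dist u (x j)) :
    (∀ i j, i ≠ j → ∀ u, u ∈ (P i).support → u ∈ (P j).support → u = v) ∧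
    (∀ i j, i ≠ j → ∀ a ∈ (P i).support, a ≠ v → ∀ b ∈ (P j).support, b ≠ v →
      G.Adj a b → G.Adj v a ∧ G.Adj v b) := by
  classical
  constructor
  · intro i j hij u hui huj
    have h1 := aux_dist (P j) u huj
    have h2 := hfar i j hij u hui
    rw [hlen j] at h1
    have : ((P j).takeUntil u huj).length = 0 := by omega
    exact (SimpleGraph.Walk.eq_of_length_eq_zero this).symm
  · intro i j hij a ha hav b hb hbv hab
    have key : ∀ (i j : Fin k) (hij : i ≠ j) (a : V) (ha : a ∈ (P i).support)
        (hav : a ≠ v) (b : V) (hb : b ∈ (P j).support) (hbv : b ≠ v)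
        (hab : G.Adj a b), G.Adj v b := by
      intro i j hij a ha hav b hb hbv hab
      have h1 := aux_dist (P j) b hb
      rw [hlen j] at h1
      have h2 := hfar i j hij a ha
      have h3 : G.dist a (x j) ≤ 1 + G.dist b (x j) := by
        calc G.dist a (x j) ≤ G.dist a b + G.dist b (x j) :=
              hconn.dist_triangle
          _ ≤ 1 + G.dist b (x j) := by
              have := G.dist_le hab.toWalk
              simp at this
              omega
      have htne : ((P j).takeUntil b hb).length ≠ 0 := fun h =>
        hbv ((SimpleGraph.Walk.eq_of_length_eq_zero h).symm)
      have : ((P j).takeUntil b hb).length = 1 := by omega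
      exact SimpleGraph.Walk.adj_of_length_eq_one this
    exact ⟨key j i hij.symm b hb hbv a ha hav hab.symm, key i j hij a ha hav b hb hbv hab⟩
end

section
/- For all integers κ ≥ 0, d ≥ 0 and s ≥ 0, there exists k ≥ 0 with the following property. Let G be a connected graph with clique number at most κ. Let x_1, ..., x_k ∈ V(G) be distinct vertices, and let v ∈ V(G) be such that the distance between v and x_i is at most d for 1 ≤ i ≤ k. Then there exist a vertex u ∈ V(G), a subset S ⊆ {1, ..., k} with |S| = s, and for each i ∈ S a shortest path Q_i in G between u and x_i of length at most d, such that all Q_i (i ∈ S) have the same length, any two of them are disjoint except for u, and for all distinct i, j ∈ S there is no edge of G between V(Q_i) \ {u} and V(Q_j) \ {u}. -/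
/-!
By pigeonhole we may assume all `x i` lie at the same distance `ℓ` from `v`; we induct on `ℓ`.
Fix geodesics `P i` from `v` to `x i` and colour each pair `i, j` by the largest level at which
`P i` and `P j` meet or are joined by an edge, and by whether `x i` and `x j` coincide, are
adjacent, or neither. Ramsey's theorem yields a large monochromatic family. Coinciding ends form a
trivial star, and pairwise adjacent ends would form a large clique. If the interaction level `μ`
is below `ℓ`, the parts of the geodesics above level `μ` are disjoint and anticomplete, so a star
for their level-`μ` vertices, given by induction, extends along them. If `μ = ℓ`, then for each
pair one end is adjacent to the predecessor of the other on its geodesic; hence some predecessor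
is adjacent to `s` of the ends, and these edges form the star.
-/

open Finset

theorem Finset.exists_seq_color_eq_of_lt (C : Type*) [Fintype C] [Nonempty C] (m : ℕ) :
    ∃ N, ∀ {ι : Type*} (f : ι → ι → C) (A : Finset ι), N ≤ #A →
      ∃ g : Fin m → ι, Function.Injective g ∧ (∀ i, g i ∈ A) ∧
        ∃ c : Fin m → C, ∀ i j, i < j → f (g i) (g j) = c i := by
  induction m with
  | zero => exact ⟨0, fun _ _ _ => ⟨Fin.elim0, fun i => i.elim0, fun i => i.elim0, Fin.elim0,
      fun i => i.elim0⟩⟩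
  | succ m ih =>
    obtain ⟨N, hN⟩ := ih
    refine ⟨Fintype.card C * N + 1, fun f A hA => ?_⟩
    classical
    obtain ⟨a, ha⟩ : A.Nonempty := card_pos.mp (by omega)
    obtain ⟨col, -, hcol⟩ := exists_le_card_fiber_of_mul_le_card_of_maps_to (f := f a)
      (s := A.erase a) (n := N) (fun _ _ => mem_univ _) univ_nonempty
      (by rw [card_univ, card_erase_of_mem ha]; omega)
    obtain ⟨g, hg, hgA, c, hc⟩ := hN f _ hcol
    simp only [mem_filter, mem_erase] at hgA
    refine ⟨Fin.cons a g, Fin.cons_injective_iff.mpr ⟨fun ⟨j, hj⟩ => (hgA j).1.1 hj, hg⟩,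
      Fin.forall_fin_succ.mpr ⟨ha, fun j => (hgA j).1.2⟩, Fin.cons col c, ?_⟩
    intro i j hij
    induction i using Fin.cases <;> induction j using Fin.cases
    · exact absurd hij (lt_irrefl _)
    · simpa using (hgA _).2
    · exact absurd hij (Fin.succ_pos _).not_gt
    · simpa using hc _ _ (Fin.succ_lt_succ_iff.mp hij)

theorem Finset.exists_monochromatic_subset (C : Type*) [Fintype C] [Nonempty C] (n : ℕ) :
    ∃ N, ∀ {ι : Type*} (f : ι → ι → C), (∀ i j, f i j = f j i) → ∀ A : Finset ι, N ≤ #A →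
      ∃ S ⊆ A, #S = n ∧ ∃ c, ∀ i ∈ S, ∀ j ∈ S, i ≠ j → f i j = c := by
  obtain ⟨N, hN⟩ := exists_seq_color_eq_of_lt C (Fintype.card C * n)
  refine ⟨N, fun f hf A hA => ?_⟩
  classical
  obtain ⟨g, hg, hgA, c, hc⟩ := hN f A hA
  obtain ⟨col, hcol⟩ := Fintype.exists_le_card_fiber_of_mul_le_card (n := n) c (by simp)
  obtain ⟨I, hI, hIn⟩ := exists_subset_card_eq hcol
  refine ⟨I.map ⟨g, hg⟩, fun _ h => ?_, (card_map _).trans hIn, col, ?_⟩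
  · obtain ⟨i, -, rfl⟩ := mem_map.mp h
    exact hgA i
  simp only [mem_map, Function.Embedding.coeFn_mk]
  rintro _ ⟨i, hi, rfl⟩ _ ⟨j, hj, rfl⟩ hij
  have hci : c i = col := (mem_filter.mp (hI hi)).2
  have hcj : c j = col := (mem_filter.mp (hI hj)).2
  rcases lt_or_gt_of_ne (ne_of_apply_ne g hij) with h | h
  · rw [hc i j h, hci]
  · rw [hf, hc j i h, hcj]

-- Double counting: every pair contributes to an out-degree, so the average out-degree is at
-- least `(#S - 1) / 2 ≥ s`.
open scoped Classical in
theorem Finset.exists_le_card_filter_of_total {ι : Type*} (r : ι → ι → Prop) (S : Finset ι)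
    (hr : ∀ i ∈ S, ∀ j ∈ S, i ≠ j → r i j ∨ r j i) {s : ℕ} (hS : 2 * s + 1 ≤ #S) :
    ∃ i ∈ S, s ≤ #{j ∈ S | i ≠ j ∧ r i j} := by
  let r' : ι → ι → Prop := fun i j => i ≠ j ∧ r i j
  have hdeg : ∀ i ∈ S, #S - 1 ≤ #(S.bipartiteAbove r' i) + #(S.bipartiteBelow r' i) := by
    intro i hi
    rw [← card_erase_of_mem hi]
    refine (card_le_card fun j hj => ?_).trans (card_union_le _ _)
    obtain ⟨hji, hj⟩ := mem_erase.mp hj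
    rcases hr i hi j hj hji.symm with h | h
    · exact mem_union_left _ ((mem_bipartiteAbove r').mpr ⟨hj, hji.symm, h⟩)
    · exact mem_union_right _ ((mem_bipartiteBelow r').mpr ⟨hj, hji, h⟩)
  have hsum : ∑ _i ∈ S, s ≤ ∑ i ∈ S, #(S.bipartiteAbove r' i) := by
    have := sum_le_sum hdeg
    rw [sum_add_distrib, ← sum_card_bipartiteAbove_eq_sum_card_bipartiteBelow, sum_const,
      smul_eq_mul] at this
    have hs : #S * (2 * s) ≤ #S * (#S - 1) := Nat.mul_le_mul_left _ (by omega)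
    rw [sum_const, smul_eq_mul]
    nlinarith
  exact exists_le_of_sum_le (card_pos.mp (by omega)) hsum

theorem SimpleGraph.CliqueFree.card_le_of_pairwise_adj {V ι : Type*} {G : SimpleGraph V} {κ : ℕ}
    (hG : G.CliqueFree (κ + 1)) (y : ι → V) (T : Finset ι)
    (hT : ∀ i ∈ T, ∀ j ∈ T, i ≠ j → G.Adj (y i) (y j)) : #T ≤ κ := by
  classical
  by_contra! h
  have hinj : Set.InjOn y T := fun i hi j hj hij => by
    by_contra hne
    exact (hT i hi j hj hne).ne hij
  refine hG.mono h (T.image y) ⟨?_, card_image_of_injOn hinj⟩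
  rw [coe_image]
  rintro _ ⟨i, hi, rfl⟩ _ ⟨j, hj, rfl⟩ hne
  exact hT i hi j hj (ne_of_apply_ne y hne)

namespace SimpleGraph

variable {V : Type*} {G : SimpleGraph V} {u v w a b : V}

def EqOrAdj (G : SimpleGraph V) (a b : V) : Prop := a = b ∨ G.Adj a b

theorem EqOrAdj.symm (h : G.EqOrAdj a b) : G.EqOrAdj b a :=
  h.imp Eq.symm Adj.symm

theorem EqOrAdj.dist_le_add_one (h : G.EqOrAdj a b) (v : V) : G.dist v b ≤ G.dist v a + 1 := by
  rcases h with rfl | h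
  · exact Nat.le_succ _
  · simpa [dist_eq_one_iff_adj.mpr h] using h.reachable.dist_triangle_right v

namespace Walk

theorem dist_getVert_of_length_eq_dist (p : G.Walk u w) (hp : p.length = G.dist u w) {t : ℕ}
    (ht : t ≤ p.length) : G.dist u (p.getVert t) = t := by
  rw [← length_eq_dist_of_subwalk hp (p.isSubwalk_take t), take_length, min_eq_left ht]

theorem dist_add_dist_le_length (p : G.Walk u w) (ha : a ∈ p.support) :
    G.dist u a + G.dist a w ≤ p.length := by
  classical
  calc G.dist u a + G.dist a w ≤ (p.takeUntil a ha).length + (p.dropUntil a ha).length :=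
        add_le_add (dist_le _) (dist_le _)
    _ = p.length := by rw [← length_append, take_spec]

theorem exists_getVert_eq_of_mem_support_drop {p : G.Walk u w} {n : ℕ}
    (ha : a ∈ (p.drop n).support) : ∃ t ≤ p.length - n, p.getVert (n + t) = a := by
  obtain ⟨t, rfl, ht⟩ := mem_support_iff_exists_getVert.mp ha
  exact ⟨t, by simpa using ht, (drop_getVert ..).symm⟩

end Walk

open scoped Classical in
noncomputable def touchLevel (G : SimpleGraph V) (p q : ℕ → V) (n : ℕ) : ℕ :=
  Nat.findGreatest (fun t => ∃ a b, max a b = t ∧ G.EqOrAdj (p a) (q b)) n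

theorem touchLevel_le (p q : ℕ → V) (n : ℕ) : G.touchLevel p q n ≤ n := by
  classical exact Nat.findGreatest_le n

theorem touchLevel_comm (p q : ℕ → V) (n : ℕ) : G.touchLevel p q n = G.touchLevel q p n := by
  unfold touchLevel
  congr 1
  ext t
  exact ⟨fun ⟨a, b, h, hab⟩ => ⟨b, a, max_comm a b ▸ h, hab.symm⟩,
    fun ⟨a, b, h, hab⟩ => ⟨b, a, max_comm a b ▸ h, hab.symm⟩⟩

theorem not_eqOrAdj_of_touchLevel_lt {p q : ℕ → V} {n i j : ℕ}
    (h : G.touchLevel p q n < max i j) (hn : max i j ≤ n) : ¬ G.EqOrAdj (p i) (q j) :=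
  by classical exact fun hij => Nat.findGreatest_is_greatest h hn ⟨i, j, rfl, hij⟩

theorem exists_eqOrAdj_touchLevel {p q : ℕ → V} (h : p 0 = q 0) (n : ℕ) :
    ∃ i j, max i j = G.touchLevel p q n ∧ G.EqOrAdj (p i) (q j) := by
  classical
  exact Nat.findGreatest_spec (P := fun t => ∃ a b, max a b = t ∧ G.EqOrAdj (p a) (q b))
    (Nat.zero_le n) ⟨0, 0, rfl, Or.inl h⟩

def IsGeodesicStar {ι : Type*} (G : SimpleGraph V) (u : V) (y : ι → V) (S : Finset ι) (L : ℕ)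
    (Q : ∀ i ∈ S, G.Walk u (y i)) : Prop :=
  (∀ i (hi : i ∈ S), (Q i hi).length = L ∧ G.dist u (y i) = L) ∧
  ∀ i (hi : i ∈ S) j (hj : j ∈ S), i ≠ j → ∀ a ∈ (Q i hi).support, ∀ b ∈ (Q j hj).support,
    a ≠ u → b ≠ u → ¬ G.EqOrAdj a b

section IsGeodesicStar

variable {ι : Type*} {y : ι → V} {S : Finset ι}

theorem isGeodesicStar_of_eq (h : ∀ i ∈ S, y i = u) :
    G.IsGeodesicStar u y S 0 (fun i hi => Walk.nil.copy rfl (h i hi).symm) :=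
  ⟨fun i hi => ⟨by simp, by rw [h i hi, dist_self]⟩,
    fun _ _ _ _ _ a ha _ _ hau _ _ => hau (by simpa using ha)⟩

theorem isGeodesicStar_of_adj (hu : ∀ i ∈ S, G.Adj u (y i))
    (hy : ∀ i ∈ S, ∀ j ∈ S, i ≠ j → ¬ G.EqOrAdj (y i) (y j)) :
    G.IsGeodesicStar u y S 1 (fun i hi => (hu i hi).toWalk) := by
  refine ⟨fun i hi => ⟨rfl, dist_eq_one_iff_adj.mpr (hu i hi)⟩, ?_⟩
  intro i hi j hj hij a ha b hb hau hbu
  simp only [Adj.toWalk, Walk.support_cons, Walk.support_nil, List.mem_cons,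
    List.not_mem_nil, or_false] at ha hb
  obtain rfl := ha.resolve_left hau
  obtain rfl := hb.resolve_left hbu
  exact hy i hi j hj hij

theorem IsGeodesicStar.append_drop (hG : G.Connected) {P : ∀ i, G.Walk v (y i)} {ℓ μ L : ℕ}
    (hP : ∀ i ∈ S, (P i).length = ℓ ∧ G.dist v (y i) = ℓ)
    (htouch : ∀ i ∈ S, ∀ j ∈ S, i ≠ j → G.touchLevel (P i).getVert (P j).getVert ℓ ≤ μ)
    {R : ∀ i ∈ S, G.Walk u ((P i).getVert μ)}
    (hR : G.IsGeodesicStar u (fun i => (P i).getVert μ) S L R) (hu : G.dist v u + L ≤ μ)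
    (hμ : μ ≤ ℓ) :
    G.IsGeodesicStar u y S (L + (ℓ - μ)) (fun i hi => (R i hi).append ((P i).drop μ)) := by
  have hlevel : ∀ i ∈ S, ∀ t ≤ ℓ, G.dist v ((P i).getVert t) = t := fun i hi t ht =>
    (P i).dist_getVert_of_length_eq_dist ((hP i hi).1.trans (hP i hi).2.symm)
      ((hP i hi).1 ▸ ht)
  have hlow : ∀ i (hi : i ∈ S), ∀ a ∈ (R i hi).support,
      G.dist v a + G.dist a ((P i).getVert μ) ≤ μ := by
    intro i hi a ha
    have h₁ := (R i hi).dist_add_dist_le_length ha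
    have h₂ := hG.dist_triangle (u := v) (v := u) (w := a)
    rw [(hR.1 i hi).1] at h₁
    omega
  have hmem : ∀ i (hi : i ∈ S), ∀ a ∈ ((R i hi).append ((P i).drop μ)).support,
      a ∈ (R i hi).support ∨ ∃ t, μ < t ∧ t ≤ ℓ ∧ (P i).getVert t = a := by
    intro i hi a ha
    rcases (Walk.mem_support_append_iff _ _).mp ha with ha | ha
    · exact Or.inl ha
    obtain ⟨t, ht, rfl⟩ := Walk.exists_getVert_eq_of_mem_support_drop ha
    rcases t.eq_zero_or_pos with rfl | ht₀
    · exact Or.inl (Walk.end_mem_support _)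
    · exact Or.inr ⟨μ + t, by omega, by rw [(hP i hi).1] at ht; omega, rfl⟩
  have hfar : ∀ i ∈ S, ∀ j ∈ S, i ≠ j → ∀ t t', t ≤ ℓ → t' ≤ ℓ → μ < max t t' →
      ¬ G.EqOrAdj ((P i).getVert t) ((P j).getVert t') :=
    fun i hi j hj hij t t' ht ht' h =>
      not_eqOrAdj_of_touchLevel_lt ((htouch i hi j hj hij).trans_lt h) (max_le ht ht')
  -- a leg of `R` can only touch a tail above level `μ` from the endpoint of the leg
  have hmixed : ∀ i (hi : i ∈ S) j, j ∈ S → i ≠ j → ∀ a ∈ (R i hi).support, ∀ t, μ < t →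
      t ≤ ℓ → ¬ G.EqOrAdj a ((P j).getVert t) := by
    intro i hi j hj hij a ha t ht ht' hat
    have h₁ := hat.dist_le_add_one v
    have h₂ := hlow i hi a ha
    rw [hlevel j hj t ht'] at h₁
    obtain rfl : a = (P i).getVert μ := hG.dist_eq_zero_iff.mp (by omega)
    exact hfar i hi j hj hij μ t (by omega) ht' (by omega) hat
  refine ⟨fun i hi => ⟨by simp [(hP i hi).1, (hR.1 i hi).1], ?_⟩, ?_⟩
  · have h₁ := dist_le ((R i hi).append ((P i).drop μ))
    have h₂ := hG.dist_triangle (u := v) (v := u) (w := y i)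
    simp only [Walk.length_append, Walk.drop_length, (hP i hi).1, (hR.1 i hi).1] at h₁
    rw [(hP i hi).2] at h₂
    omega
  intro i hi j hj hij a ha b hb hau hbu
  rcases hmem i hi a ha with ha | ⟨t, ht, ht', rfl⟩ <;>
    rcases hmem j hj b hb with hb | ⟨t', hs, hs', rfl⟩
  · exact hR.2 i hi j hj hij a ha b hb hau hbu
  · exact hmixed i hi j hj hij a ha t' hs hs'
  · exact fun h => hmixed j hj i hi (Ne.symm hij) b hb t ht ht' h.symm
  · exact hfar i hi j hj hij t t' ht' hs' (lt_max_of_lt_left ht)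

end IsGeodesicStar

section GeodesicFamily

variable {ι : Type*} {y : ι → V} {P : ∀ i, G.Walk v (y i)}

theorem exists_isGeodesicStar_of_touchLevel_eq {n s : ℕ} {S₀ : Finset ι}
    (hP : ∀ i ∈ S₀, (P i).length = n + 1 ∧ G.dist v (y i) = n + 1)
    (htouch : ∀ i ∈ S₀, ∀ j ∈ S₀, i ≠ j →
      G.touchLevel (P i).getVert (P j).getVert (n + 1) = n + 1)
    (hy : ∀ i ∈ S₀, ∀ j ∈ S₀, i ≠ j → ¬ G.EqOrAdj (y i) (y j)) (hS₀ : 2 * s + 1 ≤ #S₀) :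
    ∃ (u : V) (S : Finset ι) (L : ℕ) (Q : ∀ i ∈ S, G.Walk u (y i)),
      S ⊆ S₀ ∧ #S = s ∧ G.dist v u + L ≤ n + 1 ∧ G.IsGeodesicStar u y S L Q := by
  classical
  have hlevel : ∀ i ∈ S₀, ∀ t ≤ n + 1, G.dist v ((P i).getVert t) = t := fun i hi t ht =>
    (P i).dist_getVert_of_length_eq_dist ((hP i hi).1.trans (hP i hi).2.symm)
      ((hP i hi).1 ▸ ht)
  have hend : ∀ i ∈ S₀, (P i).getVert (n + 1) = y i := fun i hi =>
    (hP i hi).1 ▸ (P i).getVert_length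
  have hpred : ∀ i ∈ S₀, ∀ j ∈ S₀, G.EqOrAdj ((P i).getVert n) (y j) →
      G.Adj ((P i).getVert n) (y j) := by
    rintro i hi j hj (h | h)
    · have := hlevel i hi n (by omega)
      rw [h, (hP j hj).2] at this
      omega
    · exact h
  have htotal : ∀ i ∈ S₀, ∀ j ∈ S₀, i ≠ j →
      G.Adj ((P i).getVert n) (y j) ∨ G.Adj ((P j).getVert n) (y i) := by
    intro i hi j hj hij
    obtain ⟨a, b, hab, h⟩ := G.exists_eqOrAdj_touchLevel
      (p := (P i).getVert) (q := (P j).getVert) (by simp) (n + 1)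
    rw [htouch i hi j hj hij] at hab
    have h₁ := h.dist_le_add_one v
    have h₂ := h.symm.dist_le_add_one v
    rw [hlevel i hi a (by omega), hlevel j hj b (by omega)] at h₁ h₂
    obtain ⟨rfl, rfl⟩ | ⟨rfl, rfl⟩ | ⟨rfl, rfl⟩ :
        (a = n + 1 ∧ b = n + 1) ∨ (a = n ∧ b = n + 1) ∨ (a = n + 1 ∧ b = n) := by omega
    · rw [hend i hi, hend j hj] at h
      exact absurd h (hy i hi j hj hij)
    · rw [hend j hj] at h
      exact Or.inl (hpred i hi j hj h)
    · rw [hend i hi] at h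
      exact Or.inr (hpred j hj i hi h.symm)
  obtain ⟨i₀, hi₀, hdeg⟩ := exists_le_card_filter_of_total _ S₀ htotal hS₀
  obtain ⟨S, hS, rfl⟩ := exists_subset_card_eq hdeg
  have hadj : ∀ j ∈ S, G.Adj ((P i₀).getVert n) (y j) := fun j hj => (mem_filter.mp (hS hj)).2.2
  have hSS₀ : S ⊆ S₀ := fun j hj => (mem_filter.mp (hS hj)).1
  exact ⟨_, S, 1, _, hSS₀, rfl, by rw [hlevel i₀ hi₀ n (by omega)],
    isGeodesicStar_of_adj hadj fun i hi j hj => hy i (hSS₀ hi) j (hSS₀ hj)⟩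

end GeodesicFamily

-- The family `y` need not be injective: this lets the induction pass directly to the vertices
-- at a lower level of a family of geodesics, where several of them may coincide.
def StarBound (κ ℓ s k : ℕ) : Prop :=
  ∀ {V ι : Type} (G : SimpleGraph V), G.Connected → G.CliqueFree (κ + 1) →
    ∀ (v : V) (y : ι → V) (A : Finset ι), k ≤ #A → (∀ i ∈ A, G.dist v (y i) = ℓ) →
      ∃ (u : V) (S : Finset ι) (L : ℕ) (Q : ∀ i ∈ S, G.Walk u (y i)),
        S ⊆ A ∧ #S = s ∧ G.dist v u + L ≤ ℓ ∧ G.IsGeodesicStar u y S L Q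

theorem StarBound.mono {κ ℓ s k k' : ℕ} (h : StarBound κ ℓ s k) (hk : k ≤ k') :
    StarBound κ ℓ s k' :=
  fun G hG hκ v y A hA hy => h G hG hκ v y A (hk.trans hA) hy

theorem starBound_zero (κ s : ℕ) : StarBound κ 0 s s := by
  intro V ι G hG _ v y A hA hy
  obtain ⟨S, hSA, hS⟩ := exists_subset_card_eq hA
  have hyv : ∀ i ∈ S, y i = v := fun i hi => (hG.dist_eq_zero_iff.mp (hy i (hSA hi))).symm
  exact ⟨v, S, 0, _, hSA, hS, by simp, isGeodesicStar_of_eq hyv⟩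

theorem exists_starBound_succ {κ s n K : ℕ} (hK : ∀ μ ≤ n, StarBound κ μ s K) :
    ∃ N, StarBound κ (n + 1) s N := by
  obtain ⟨N, hN⟩ := exists_monochromatic_subset (Fin (n + 2) × Prop × Prop) (2 * s + κ + 1 + K)
  refine ⟨N, fun {V ι} G hG hκ v y A hA hy => ?_⟩
  classical
  choose P hP using fun i => hG.exists_walk_length_eq_dist v (y i)
  have hPA : ∀ i ∈ A, (P i).length = n + 1 ∧ G.dist v (y i) = n + 1 :=
    fun i hi => ⟨(hP i).trans (hy i hi), hy i hi⟩
  let c : ι → ι → Fin (n + 2) × Prop × Prop := fun i j =>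
    (⟨G.touchLevel (P i).getVert (P j).getVert (n + 1), Nat.lt_succ_of_le (touchLevel_le ..)⟩,
      y i = y j, G.Adj (y i) (y j))
  obtain ⟨S₀, hS₀A, hS₀, ⟨μ, e, a⟩, hc⟩ := hN c
    (fun i j => by simp only [c, touchLevel_comm, eq_comm, G.adj_comm]) A hA
  simp only [c, Prod.mk.injEq, Fin.ext_iff, eq_iff_iff] at hc
  by_cases he : e
  · obtain ⟨i₀, hi₀⟩ : S₀.Nonempty := card_pos.mp (by omega)
    obtain ⟨S, hS, hSs⟩ := exists_subset_card_eq (show s ≤ #S₀ by omega)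
    have hyS : ∀ i ∈ S, y i = y i₀ := fun i hi =>
      if hii : i = i₀ then hii ▸ rfl else ((hc i (hS hi) i₀ hi₀ hii).2.1).mpr he
    exact ⟨y i₀, S, 0, _, hS.trans hS₀A, hSs, by rw [hy i₀ (hS₀A hi₀)],
      isGeodesicStar_of_eq hyS⟩
  by_cases ha : a
  · have := hκ.card_le_of_pairwise_adj y S₀ fun i hi j hj hij => (hc i hi j hj hij).2.2.mpr ha
    omega
  have hsep : ∀ i ∈ S₀, ∀ j ∈ S₀, i ≠ j → ¬ G.EqOrAdj (y i) (y j) := fun i hi j hj hij h =>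
    h.elim (fun h => he ((hc i hi j hj hij).2.1.mp h)) (fun h => ha ((hc i hi j hj hij).2.2.mp h))
  rcases (Nat.lt_succ_iff.mp μ.is_lt).lt_or_eq with hμ | hμ
  · obtain ⟨u, S, L, R, hS, hSs, hu, hR⟩ := hK μ (by omega) G hG hκ v (fun i => (P i).getVert μ)
      S₀ (by omega) fun i hi => (P i).dist_getVert_of_length_eq_dist
        ((hPA i (hS₀A hi)).1.trans (hPA i (hS₀A hi)).2.symm) (by rw [(hPA i (hS₀A hi)).1]; omega)
    exact ⟨u, S, L + (n + 1 - μ), _, hS.trans hS₀A, hSs, by omega,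
      hR.append_drop hG (fun i hi => hPA i (hS₀A (hS hi)))
        (fun i hi j hj hij => (hc i (hS hi) j (hS hj) hij).1.le) hu (by omega)⟩
  · obtain ⟨u, S, L, Q, hS, hSs, hu, hQ⟩ := exists_isGeodesicStar_of_touchLevel_eq (s := s)
      (fun i hi => hPA i (hS₀A hi)) (fun i hi j hj hij => (hc i hi j hj hij).1.trans hμ) hsep
      (by omega)
    exact ⟨u, S, L, Q, hS.trans hS₀A, hSs, hu, hQ⟩

theorem exists_starBound_forall_le (κ s d : ℕ) : ∃ K, ∀ ℓ ≤ d, StarBound κ ℓ s K := by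
  induction d with
  | zero => exact ⟨s, fun ℓ hℓ => Nat.le_zero.mp hℓ ▸ starBound_zero κ s⟩
  | succ n ih =>
    obtain ⟨K, hK⟩ := ih
    obtain ⟨N, hN⟩ := exists_starBound_succ hK
    refine ⟨max K N, fun ℓ hℓ => ?_⟩
    rcases Nat.lt_succ_iff_lt_or_eq.mp (Nat.lt_succ_of_le hℓ) with hℓ | rfl
    · exact StarBound.mono (hK ℓ (by omega)) (le_max_left _ _)
    · exact StarBound.mono hN (le_max_right _ _)

end SimpleGraph

/-- Theorem 2.1, getstar: for all `κ, d, s` there exists `k` such that in any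
connected graph with clique number at most `κ`, given `k` distinct vertices all at distance
at most `d` from a vertex `v`, there are a vertex `u`, a set `S` of `s` of the given
vertices, and shortest paths `Q i` from `u` to them, all of the same length at most `d`,
pairwise disjoint except for `u` and pairwise anticomplete away from `u`. -/
theorem stmt_4 (κ d s : ℕ) :
    ∃ k : ℕ, ∀ {V : Type} (G : SimpleGraph V), G.Connected →
      (∀ (n : ℕ) (t : Finset V), G.IsNClique n t → n ≤ κ) →
      ∀ (x : Fin k → V), Function.Injective x →
      ∀ v : V, (∀ i, G.dist v (x i) ≤ d) →
      ∃ (u : V) (S : Finset (Fin k)) (_ : S.card = s)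
        (Q : ∀ i : Fin k, i ∈ S → G.Walk u (x i)),
        (∃ L : ℕ, L ≤ d ∧ ∀ (i : Fin k) (hi : i ∈ S), (Q i hi).length = L) ∧
        (∀ (i : Fin k) (hi : i ∈ S), (Q i hi).IsPath ∧
          (Q i hi).length = G.dist u (x i)) ∧
        (∀ (i : Fin k) (hi : i ∈ S) (j : Fin k) (hj : j ∈ S), i ≠ j →
          (∀ w, w ∈ (Q i hi).support → w ∈ (Q j hj).support → w = u) ∧
          (∀ a ∈ (Q i hi).support, a ≠ u → ∀ b ∈ (Q j hj).support, b ≠ u →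
            ¬ G.Adj a b)) := by
  obtain ⟨K, hK⟩ := SimpleGraph.exists_starBound_forall_le κ s d
  refine ⟨(d + 1) * K, fun G hG hclq x _ v hd => ?_⟩
  classical
  obtain ⟨ℓ, hℓ, hA⟩ := exists_le_card_fiber_of_mul_le_card_of_maps_to
    (f := fun i => G.dist v (x i)) (s := univ) (t := range (d + 1)) (n := K)
    (fun i _ => mem_range.mpr (Nat.lt_succ_of_le (hd i))) (nonempty_range_add_one) (by simp)
  have hκ : G.CliqueFree (κ + 1) := fun t ht => by have := hclq _ t ht; omega
  obtain ⟨u, S, L, Q, -, hS, hL, hQ⟩ := hK ℓ (Nat.lt_succ_iff.mp (mem_range.mp hℓ)) G hG hκ v x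
    _ hA fun i hi => (mem_filter.mp hi).2
  have hQdist : ∀ i (hi : i ∈ S), (Q i hi).length = G.dist u (x i) := fun i hi =>
    (hQ.1 i hi).1.trans (hQ.1 i hi).2.symm
  refine ⟨u, S, hS, Q, ⟨L, by have := mem_range.mp hℓ; omega, fun i hi => (hQ.1 i hi).1⟩,
    fun i hi => ⟨(Q i hi).isPath_of_length_eq_dist (hQdist i hi), hQdist i hi⟩,
    fun i hi j hj hij => ⟨fun w hwi hwj => ?_, fun a ha hau b hb hbu hab => ?_⟩⟩
  · by_contra hw
    exact hQ.2 i hi j hj hij w hwi w hwj hw hw (Or.inl rfl)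
  · exact hQ.2 i hi j hj hij a ha b hb hau hbu (Or.inr hab)
end

section
/- Let k ≥ 1 be an integer, let (T, r) be a rooted tree, and let (T_q : q ∈ Q) be a finite family of limbs in (T, r). Define a graph J on vertex set Q by making distinct q_1, q_2 adjacent if there are at least k vertices x of T such that x lies in the interior of both T_{q_1} and T_{q_2} and x lies in no T_q for q ∈ Q \ {q_1, q_2}. Then J is a forest. -/
/-- `v` is an ancestor of `u` in the tree `G` rooted at `r`: `v` lies on the path of the
tree from `u` to `r`. -/
def IsAncestor {V : Type} (G : SimpleGraph V) (r u v : V) : Prop :=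
  G.dist u v + G.dist v r = G.dist u r

/-- `x` lies on the (unique) path of the tree `G` between `a` and `b`. -/
def OnTreePath {V : Type} (G : SimpleGraph V) (a b x : V) : Prop :=
  G.dist a x + G.dist x b = G.dist a b

/-- The pair `(leaf, start)` determines a limb of the rooted tree `(G, r)`: a path of
positive length from a leaf `≠ r` to one of its ancestors. -/
def IsLimb {V : Type} (G : SimpleGraph V) (r leaf start : V) : Prop :=
  IsRootedLeaf G r leaf ∧ leaf ≠ r ∧ IsAncestor G r leaf start ∧ start ≠ leaf

/-- `x` lies in the interior of the limb from `leaf` to `start`. -/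
def InLimbInterior {V : Type} (G : SimpleGraph V) (leaf start x : V) : Prop :=
  OnTreePath G leaf start x ∧ x ≠ leaf ∧ x ≠ start

/-- The adjacency relation of the `k`-overlap graph of a family of limbs. -/
def OverlapRel {V Q : Type} (G : SimpleGraph V) (leaf start : Q → V) (k : ℕ)
    (q₁ q₂ : Q) : Prop :=
  k ≤ {x | InLimbInterior G (leaf q₁) (start q₁) x ∧
          InLimbInterior G (leaf q₂) (start q₂) x ∧
          ∀ q, q ≠ q₁ → q ≠ q₂ → ¬ OnTreePath G (leaf q) (start q) x}.ncard

/-!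
Weight each edge `{q₁, q₂}` of the overlap graph by the depth of a vertex `x` that lies in the
interior of both limbs and on no other limb. Let `q₀q₁` and `q₁q₂` be edges with `q₀ ≠ q₂`, the
first no heavier than the second, and let `y` be the witness of `q₀q₁`. Then `y` lies on `T_{q₁}`,
strictly below its top and no deeper than `x`, hence above `x`; as the ancestors of `x` form a
chain and `y ∉ T_{q₂}`, the top of `T_{q₂}` lies strictly below `y`. So the top of `T_{q₁}` is
strictly higher than the top of `T_{q₂}`. Applied at both ends of a heaviest edge of a cycle, this
gives a contradiction.
-/

open SimpleGraph

variable {V : Type} {G : SimpleGraph V}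

lemma onTreePath_of_mem_support {a b x : V} {p : G.Walk a b}
    (hp : p.length = G.dist a b) (hx : x ∈ p.support) : OnTreePath G a b x := by
  classical
  have hsplit := congrArg Walk.length (p.take_spec hx)
  rw [Walk.length_append] at hsplit
  have := dist_le (p.takeUntil x hx)
  have := dist_le (p.dropUntil x hx)
  have := (p.takeUntil x hx).reachable.dist_triangle_left b
  unfold OnTreePath
  omega

lemma SimpleGraph.IsAcyclic.length_eq_dist (hG : G.IsAcyclic) {a b : V} {p : G.Walk a b}
    (hp : p.IsPath) : p.length = G.dist a b := by
  obtain ⟨q, hq, hlen⟩ := p.reachable.exists_path_of_dist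
  have hpq : p = q := congrArg Subtype.val ((hG.subsingleton_path a b).elim ⟨p, hp⟩ ⟨q, hq⟩)
  rw [hpq, hlen]

lemma SimpleGraph.IsTree.mem_support_of_onTreePath (hG : G.IsTree) {a b x : V} {p : G.Walk a b}
    (hp : p.IsPath) (hx : OnTreePath G a b x) : x ∈ p.support := by
  obtain ⟨p₁, -, h₁⟩ := hG.connected.exists_path_of_dist a x
  obtain ⟨p₂, -, h₂⟩ := hG.connected.exists_path_of_dist x b
  have hlen : (p₁.append p₂).length = G.dist a b := by rw [Walk.length_append, h₁, h₂]; exact hx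
  have hpath := (p₁.append p₂).isPath_of_length_eq_dist hlen
  have hp₁₂ : p₁.append p₂ = p :=
    congrArg Subtype.val <| (hG.isAcyclic.subsingleton_path a b).elim ⟨_, hpath⟩ ⟨p, hp⟩
  simp [← hp₁₂]

lemma isAncestor_refl (r u : V) : IsAncestor G r u u := by
  simp [IsAncestor]

lemma IsAncestor.trans (hc : G.Connected) {r u v w : V} (huv : IsAncestor G r u v)
    (hvw : IsAncestor G r v w) : IsAncestor G r u w := by
  have := hc.dist_triangle (u := u) (v := v) (w := w)
  have := hc.dist_triangle (u := u) (v := w) (w := r)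
  unfold IsAncestor at *
  omega

lemma IsAncestor.dist_lt (hc : G.Connected) {r u v : V} (huv : IsAncestor G r u v)
    (hne : u ≠ v) : G.dist v r < G.dist u r := by
  have := hc.pos_dist_of_ne hne
  unfold IsAncestor at huv
  omega

lemma onTreePath_iff_isAncestor (hc : G.Connected) {r a b x : V} (hab : IsAncestor G r a b) :
    OnTreePath G a b x ↔ IsAncestor G r a x ∧ IsAncestor G r x b := by
  have := hc.dist_triangle (u := x) (v := b) (w := r)
  have := hc.dist_triangle (u := a) (v := x) (w := r)
  unfold OnTreePath IsAncestor at *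
  omega

lemma IsAncestor.total (hG : G.IsTree) {r u v w : V} (hv : IsAncestor G r u v)
    (hw : IsAncestor G r u w) : IsAncestor G r v w ∨ IsAncestor G r w v := by
  classical
  obtain ⟨p, hp, -⟩ := hG.connected.exists_path_of_dist u r
  have hvp := hG.mem_support_of_onTreePath hp hv
  have hsplit : w ∈ (p.takeUntil v hvp).support ∨ w ∈ (p.dropUntil v hvp).support := by
    rw [← Walk.mem_support_append_iff, p.take_spec hvp]
    exact hG.mem_support_of_onTreePath hp hw
  rcases hsplit with hw' | hw'
  · have := onTreePath_of_mem_support (hG.isAcyclic.length_eq_dist (hp.takeUntil hvp)) hw'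
    unfold IsAncestor OnTreePath at *
    omega
  · exact .inl <|
      onTreePath_of_mem_support (hG.isAcyclic.length_eq_dist (hp.dropUntil hvp)) hw'

lemma dist_start_lt_of_shared_of_exclusive (hG : G.IsTree) {r l₁ s₁ l₂ s₂ x y : V}
    (h₁ : IsAncestor G r l₁ s₁) (h₂ : IsAncestor G r l₂ s₂)
    (hx₁ : OnTreePath G l₁ s₁ x) (hx₂ : OnTreePath G l₂ s₂ x)
    (hy₁ : OnTreePath G l₁ s₁ y) (hys : y ≠ s₁) (hy₂ : ¬ OnTreePath G l₂ s₂ y)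
    (hyx : G.dist y r ≤ G.dist x r) :
    G.dist s₁ r < G.dist s₂ r := by
  have hc := hG.connected
  rw [onTreePath_iff_isAncestor hc h₁] at hx₁ hy₁
  rw [onTreePath_iff_isAncestor hc h₂] at hx₂ hy₂
  have hxy : IsAncestor G r x y := by
    rcases hx₁.1.total hG hy₁.1 with h | h
    · exact h
    · rcases eq_or_ne y x with rfl | hne
      · exact h
      · exact absurd hyx (not_le.2 (h.dist_lt hc hne))
  have hl₂y : IsAncestor G r l₂ y := hx₂.1.trans hc hxy
  have hs₂y : IsAncestor G r s₂ y := (hx₂.2.total hG hxy).resolve_right (hy₂ ⟨hl₂y, ·⟩)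
  have hs₂ : s₂ ≠ y := by
    rintro rfl
    exact hy₂ ⟨hl₂y, isAncestor_refl r s₂⟩
  calc G.dist s₁ r < G.dist y r := hy₁.2.dist_lt hc hys
    _ < G.dist s₂ r := hs₂y.dist_lt hc hs₂

lemma SimpleGraph.Walk.IsCycle.exists_adj_toSubgraph_ne {Q : Type*} {H : SimpleGraph Q}
    {v a b : Q} {c : H.Walk v v} (hc : c.IsCycle) (hab : c.toSubgraph.Adj a b) :
    ∃ a', c.toSubgraph.Adj a' a ∧ a' ≠ b := by
  have h2 := hc.ncard_neighborSet_toSubgraph_eq_two (c.mem_support_of_adj_toSubgraph hab)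
  obtain ⟨a', ha', hne⟩ := Set.exists_ne_of_one_lt_ncard (h2 ▸ one_lt_two) b
  exact ⟨a', ha'.symm, hne⟩

theorem SimpleGraph.isAcyclic_of_weight_le_imp_lt {Q α β : Type*} [LinearOrder α] [Preorder β]
    {H : SimpleGraph Q} (w : Sym2 Q → α) (h : Q → β)
    (hwh : ∀ ⦃a b c⦄, H.Adj a b → H.Adj b c → a ≠ c → w s(a, b) ≤ w s(b, c) → h b < h c) :
    H.IsAcyclic := by
  classical
  intro v c hc
  have hne : c.edges.toFinset.Nonempty := by
    simpa [List.toFinset_nonempty_iff, Walk.edges_eq_nil] using hc.not_nil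
  obtain ⟨e, he, hmax⟩ := c.edges.toFinset.exists_max_image w hne
  induction e using Sym2.ind with | _ a b => ?_
  have hmax' : ∀ {a' b'}, c.toSubgraph.Adj a' b' → w s(a', b') ≤ w s(a, b) := fun hadj =>
    hmax _ (List.mem_toFinset.2 (Walk.adj_toSubgraph_iff_mem_edges.1 hadj))
  have hab : c.toSubgraph.Adj a b := Walk.adj_toSubgraph_iff_mem_edges.2 (List.mem_toFinset.1 he)
  obtain ⟨a', ha', ha'b⟩ := hc.exists_adj_toSubgraph_ne hab
  obtain ⟨b', hb', hb'a⟩ := hc.exists_adj_toSubgraph_ne hab.symm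
  have hlt : h a < h b := hwh ha'.adj_sub hab.adj_sub ha'b (hmax' ha')
  have hgt : h b < h a := by
    have hw := hmax' hb'
    rw [Sym2.eq_swap (a := a)] at hw
    exact hwh hb'.adj_sub hab.symm.adj_sub hb'a hw
  exact lt_asymm hlt hgt

def sharedInterior {Q : Type} (G : SimpleGraph V) (leaf start : Q → V) (e : Sym2 Q) : Set V :=
  {x | (∀ q ∈ e, InLimbInterior G (leaf q) (start q) x) ∧
    ∀ q ∉ e, ¬ OnTreePath G (leaf q) (start q) x}

lemma overlapRel_iff {Q : Type} {leaf start : Q → V} {k : ℕ} {a b : Q} :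
    OverlapRel G leaf start k a b ↔ k ≤ (sharedInterior G leaf start s(a, b)).ncard := by
  unfold OverlapRel sharedInterior
  congr! 3
  simp only [Sym2.mem_iff, forall_eq_or_imp, forall_eq, not_or, and_imp, and_assoc]

lemma sharedInterior_nonempty {Q : Type} {leaf start : Q → V} {k : ℕ} (hk : 1 ≤ k) {a b : Q}
    (hab : (fromRel (OverlapRel G leaf start k)).Adj a b) :
    (sharedInterior G leaf start s(a, b)).Nonempty := by
  rcases hab.2 with h | h
  · exact Set.nonempty_of_ncard_ne_zero (by rw [overlapRel_iff] at h; omega)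
  · rw [Sym2.eq_swap]
    exact Set.nonempty_of_ncard_ne_zero (by rw [overlapRel_iff] at h; omega)

theorem stmt_5_general {V Q : Type} (G : SimpleGraph V) (hG : G.IsTree) (r : V)
    (k : ℕ) (hk : 1 ≤ k) (leaf start : Q → V)
    (hlimb : ∀ q, IsLimb G r (leaf q) (start q)) :
    (SimpleGraph.fromRel (OverlapRel G leaf start k)).IsAcyclic := by
  -- Any exclusively shared vertex would do; the infimum just picks one, independently of order.
  set weight : Sym2 Q → ℕ := fun e => sInf ((G.dist · r) '' sharedInterior G leaf start e)
  have hwitness : ∀ {a b}, (fromRel (OverlapRel G leaf start k)).Adj a b →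
      ∃ x ∈ sharedInterior G leaf start s(a, b), G.dist x r = weight s(a, b) := fun hab =>
    Nat.sInf_mem ((sharedInterior_nonempty hk hab).image _)
  refine isAcyclic_of_weight_le_imp_lt weight (fun q => G.dist (start q) r) ?_
  intro a b c hab hbc hac hle
  obtain ⟨y, ⟨hy, hy'⟩, hyd⟩ := hwitness hab
  obtain ⟨x, ⟨hx, -⟩, hxd⟩ := hwitness hbc
  have hyb := hy b (Sym2.mem_mk_right a b)
  have hyc := hy' c (by simp [Sym2.mem_iff, hac.symm, hbc.ne.symm])
  exact dist_start_lt_of_shared_of_exclusive hG (hlimb b).2.2.1 (hlimb c).2.2.1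
    (hx b (Sym2.mem_mk_left b c)).1 (hx c (Sym2.mem_mk_right b c)).1 hyb.1 hyb.2.2 hyc
    (hyd ▸ hxd ▸ hle)

/-- the `k`-overlap graph of a finite family of limbs of a rooted tree is a
forest. -/
theorem stmt_5 {V Q : Type} [Fintype Q] (G : SimpleGraph V) (hG : G.IsTree) (r : V)
    (k : ℕ) (hk : 1 ≤ k) (leaf start : Q → V)
    (hlimb : ∀ q, IsLimb G r (leaf q) (start q)) :
    (SimpleGraph.fromRel (OverlapRel G leaf start k)).IsAcyclic :=
  stmt_5_general G hG r k hk leaf start hlimb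
end

section
/- For every finite forest J and every integer k ≥ 1, there is a rooted tree (T, r) and a family of limbs (T_q : q ∈ V(J)) in (T, r) such that no two limbs of the family share an end, and the k-overlap graph of this family is isomorphic to J (via the identity map on V(J)). -/
/-!
Orient the forest `J` by rooting each component, so that every vertex `q` has at most one
parent. Build the tree from chains: each `q` owns a vertical chain, cut into consecutive
segments of `k + 1` vertices, one for every vertex of `J`; the chain of `q` hangs from the bottom
of the segment of `q` in the chain of its parent (or of a common chain below the root if `q` is
a root of `J`), and a leaf hangs below the chain. The limb of `q` runs from that leaf up to the
top of the segment of `q`. Two limbs meet only if one vertex is the parent of the other, and then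
both interiors contain the `k` vertices of that segment below its top, which lie on no other limb.
-/

open SimpleGraph

def parentGraph {V : Type*} (f : V → V) : SimpleGraph V := SimpleGraph.fromRel fun u v => f u = v

lemma parentGraph_adj {V : Type*} {f : V → V} {u v : V} :
    (parentGraph f).Adj u v ↔ u ≠ v ∧ (f u = v ∨ f v = u) := by
  simp [parentGraph]

structure IsDepthFunction {V : Type*} (f : V → V) (r : V) (d : V → ℕ) : Prop where
  map_root : f r = r
  depth_eq_zero_iff : ∀ v, d v = 0 ↔ v = r
  depth_map_add_one : ∀ v, v ≠ r → d (f v) + 1 = d v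

namespace IsDepthFunction

section

variable {V : Type*} {f : V → V} {r : V} {d : V → ℕ} (hd : IsDepthFunction f r d)
include hd

lemma ne_root_of_depth_pos {v : V} (hv : 0 < d v) : v ≠ r :=
  fun h => hv.ne' ((hd.depth_eq_zero_iff v).mpr h)

lemma depth_iterate {v : V} {i : ℕ} (hi : i ≤ d v) : d (f^[i] v) = d v - i := by
  induction i with
  | zero => rfl
  | succ i ih =>
    have := hd.depth_map_add_one _ (hd.ne_root_of_depth_pos (v := f^[i] v) (by omega))
    rw [Function.iterate_succ_apply']
    omega

lemma iterate_depth (v : V) : f^[d v] v = r :=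
  (hd.depth_eq_zero_iff _).mp (by rw [hd.depth_iterate le_rfl, Nat.sub_self])

lemma adj_parent {v : V} (hv : v ≠ r) : (parentGraph f).Adj v (f v) := by
  refine parentGraph_adj.mpr ⟨fun h => ?_, Or.inl rfl⟩
  have := hd.depth_map_add_one v hv
  rw [← h] at this
  omega

lemma depth_eq_or_eq_of_adj {u v : V} (h : (parentGraph f).Adj u v) :
    d u = d v + 1 ∨ d v = d u + 1 := by
  obtain ⟨hne, rfl | rfl⟩ := parentGraph_adj.mp h
  · exact Or.inl (hd.depth_map_add_one u fun hu => hne (hu ▸ hd.map_root.symm)).symm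
  · exact Or.inr (hd.depth_map_add_one v fun hv => hne (hv ▸ hd.map_root)).symm

lemma eq_parent_of_adj_of_depth_lt {u v : V} (h : (parentGraph f).Adj u v) (hlt : d v < d u) :
    v = f u := by
  obtain ⟨hne, huv | hvu⟩ := parentGraph_adj.mp h
  · exact huv.symm
  · have := hd.depth_map_add_one v fun hv => hne (by rw [← hvu, hv, hd.map_root])
    rw [hvu] at this
    omega

lemma depth_le_depth_add_length {u v : V} (p : (parentGraph f).Walk u v) :
    d u ≤ d v + p.length := by
  induction p with
  | nil => simp
  | cons h _ ih =>
    have := hd.depth_eq_or_eq_of_adj h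
    simp only [Walk.length_cons]
    omega

lemma exists_walk_iterate {v : V} {i : ℕ} (hi : i ≤ d v) :
    ∃ p : (parentGraph f).Walk v (f^[i] v),
      p.length = i ∧ ∀ x, x ∈ p.support ↔ ∃ j ≤ i, f^[j] v = x := by
  induction i generalizing v with
  | zero => exact ⟨Walk.nil, rfl, fun x => by simp [eq_comm]⟩
  | succ i ih =>
    have hv : v ≠ r := hd.ne_root_of_depth_pos (by omega)
    obtain ⟨p, hlen, hsupp⟩ := ih (v := f v) (by have := hd.depth_map_add_one v hv; omega)
    refine ⟨(Walk.cons (hd.adj_parent hv) p).copy rfl (Function.iterate_succ_apply f i v).symm,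
      by simp [hlen], fun x => ?_⟩
    rw [Walk.support_copy, Walk.support_cons, List.mem_cons, hsupp]
    simp only [← Function.iterate_succ_apply]
    constructor
    · rintro (rfl | ⟨j, hj, rfl⟩)
      · exact ⟨0, by omega, rfl⟩
      · exact ⟨j + 1, by omega, rfl⟩
    · rintro ⟨_ | j, hj, rfl⟩
      · exact Or.inl rfl
      · exact Or.inr ⟨j, by omega, rfl⟩

lemma connected : (parentGraph f).Connected := by
  have hroot (v : V) : (parentGraph f).Reachable v r := by
    obtain ⟨p, -⟩ := hd.exists_walk_iterate le_rfl
    exact ⟨p.copy rfl (hd.iterate_depth v)⟩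
  exact (connected_iff _).mpr ⟨fun u v => (hroot u).trans (hroot v).symm, ⟨r⟩⟩

lemma dist_iterate {v : V} {i : ℕ} (hi : i ≤ d v) : (parentGraph f).dist v (f^[i] v) = i := by
  obtain ⟨p, hlen, -⟩ := hd.exists_walk_iterate hi
  obtain ⟨q, hq⟩ := hd.connected.exists_walk_length_eq_dist v (f^[i] v)
  have := hd.depth_le_depth_add_length q
  have := hd.depth_iterate hi
  have := dist_le p
  omega

lemma dist_root (v : V) : (parentGraph f).dist v r = d v := by
  conv_lhs => rw [← hd.iterate_depth v]
  exact hd.dist_iterate le_rfl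

/-- The two neighbours of a deepest vertex of a cycle would both be its parent. -/
lemma isAcyclic : (parentGraph f).IsAcyclic := by
  classical
  intro v c hc
  obtain ⟨u, hu, hmax⟩ := c.support.toFinset.exists_max_image d ⟨v, by simp⟩
  simp only [List.mem_toFinset] at hu hmax
  set c' := c.rotate u hu
  have hc' : c'.IsCycle := hc.rotate hu
  have hmax' : ∀ y ∈ c'.support, d y ≤ d u := fun y hy =>
    hmax y ((Walk.mem_support_rotate_iff c u hu).mp hy)
  have hnil : ¬c'.Nil := hc'.not_nil
  have hparent {y : V} (hadj : (parentGraph f).Adj u y) (hy : y ∈ c'.support) : y = f u := by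
    refine hd.eq_parent_of_adj_of_depth_lt hadj ?_
    rcases hd.depth_eq_or_eq_of_adj hadj with h | h
    · omega
    · have := hmax' y hy; omega
  exact hc'.snd_ne_penultimate <|
    (hparent (Walk.adj_snd hnil) (c'.getVert_mem_support 1)).trans
      (hparent (Walk.adj_penultimate hnil).symm (c'.getVert_mem_support _)).symm

lemma isTree : (parentGraph f).IsTree := ⟨hd.connected, hd.isAcyclic⟩

end

variable {V : Type} {f : V → V} {r : V} {d : V → ℕ} (hd : IsDepthFunction f r d)
include hd

lemma isAncestor_iterate {v : V} {m : ℕ} (hm : m ≤ d v) :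
    IsAncestor (parentGraph f) r v (f^[m] v) := by
  rw [IsAncestor, hd.dist_iterate hm, hd.dist_root, hd.dist_root, hd.depth_iterate hm]
  omega

lemma isRootedLeaf_of_forall_ne {v : V} (hv : ∀ u, f u ≠ v) :
    IsRootedLeaf (parentGraph f) r v := by
  rintro u ⟨hadj, hdist⟩
  rw [dist_comm, hd.dist_root, dist_comm, hd.dist_root] at hdist
  have := hd.eq_parent_of_adj_of_depth_lt hadj.symm (by omega)
  exact hv u this.symm

/-- If `x` lies between `v` and `w`, the geodesics `v → x → w` concatenate to a path, which in a
tree is the vertical one. -/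
lemma onTreePath_iterate_iff {v x : V} {m : ℕ} (hm : m ≤ d v) :
    OnTreePath (parentGraph f) v (f^[m] v) x ↔ ∃ i ≤ m, f^[i] v = x := by
  obtain ⟨p, hlen, hsupp⟩ := hd.exists_walk_iterate hm
  rw [OnTreePath, hd.dist_iterate hm]
  constructor
  · intro hx
    obtain ⟨p₁, hp₁⟩ := hd.connected.exists_walk_length_eq_dist v x
    obtain ⟨p₂, hp₂⟩ := hd.connected.exists_walk_length_eq_dist x (f^[m] v)
    have hdist : (p₁.append p₂).length = (parentGraph f).dist v (f^[m] v) := by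
      rw [Walk.length_append, hp₁, hp₂, hd.dist_iterate hm, hx]
    have hpath : (p₁.append p₂).IsPath := Walk.isPath_of_length_eq_dist _ hdist
    have hp : p.IsPath := Walk.isPath_of_length_eq_dist _ (by rw [hlen, hd.dist_iterate hm])
    have : p₁.append p₂ = p :=
      congrArg Subtype.val ((hd.isAcyclic.subsingleton_path _ _).elim ⟨_, hpath⟩ ⟨p, hp⟩)
    rw [← hsupp, ← this]
    exact Walk.mem_support_append_iff _ _ |>.mpr (Or.inl p₁.end_mem_support)
  · rintro ⟨i, hi, rfl⟩
    have hsplit : f^[m] v = f^[m - i] (f^[i] v) := by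
      rw [← Function.iterate_add_apply, Nat.sub_add_cancel hi]
    rw [hd.dist_iterate (hi.trans hm), hsplit,
      hd.dist_iterate (by rw [hd.depth_iterate (hi.trans hm)]; omega)]
    omega

lemma eq_iterate_of_mem {S : Set V} {v w : V} (hv : v ∈ S) (hw : w ∈ S)
    (hclosed : ∀ x ∈ S, x ≠ w → f x ∈ S) (hrange : ∀ x ∈ S, d w ≤ d x ∧ d x ≤ d v)
    (hinj : Set.InjOn d S) :
    f^[d v - d w] v = w ∧ ∀ x, x ∈ S ↔ ∃ i ≤ d v - d w, f^[i] v = x := by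
  have hdw := (hrange w hw).2
  have hiter : ∀ i ≤ d v - d w, f^[i] v ∈ S := by
    intro i hi
    induction i with
    | zero => exact hv
    | succ i ih =>
      have hne : f^[i] v ≠ w := fun h => by
        have := hd.depth_iterate (v := v) (i := i) (by omega)
        rw [h] at this
        omega
      rw [Function.iterate_succ_apply']
      exact hclosed _ (ih (by omega)) hne
  have hdepth {i : ℕ} (hi : i ≤ d v - d w) : d (f^[i] v) = d v - i :=
    hd.depth_iterate (by omega)
  refine ⟨hinj (hiter _ le_rfl) hw (by rw [hdepth le_rfl]; omega),
    fun x => ⟨fun hx => ?_, fun ⟨i, hi, hix⟩ => hix ▸ hiter i hi⟩⟩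
  obtain ⟨hx₁, hx₂⟩ := hrange x hx
  exact ⟨d v - d x, by omega, hinj (hiter _ (by omega)) hx (by rw [hdepth (by omega)]; omega)⟩

end IsDepthFunction

namespace SimpleGraph

variable {V : Type*} {G : SimpleGraph V}

lemma dist_le_dist_add_one_of_adj {u v w : V} (h : G.Adj w v) (hw : G.Reachable u w) :
    G.dist u v ≤ G.dist u w + 1 := by
  obtain ⟨p, hp⟩ := hw.exists_walk_length_eq_dist
  simpa [hp] using dist_le (p.concat h)

/-- Geodesics from `u` through two such neighbours would be two paths from `u` to `v`. -/
lemma IsAcyclic.eq_of_adj_of_dist_lt (hG : G.IsAcyclic) {u v w₁ w₂ : V}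
    (h₁ : G.Adj v w₁) (h₂ : G.Adj v w₂)
    (hd₁ : G.dist u w₁ < G.dist u v) (hd₂ : G.dist u w₂ < G.dist u v) : w₁ = w₂ := by
  have hv : G.Reachable u v := Reachable.of_dist_ne_zero (by omega)
  have geodesic {w : V} (h : G.Adj v w) (hd : G.dist u w < G.dist u v) :
      ∃ p : G.Walk u w, (p.concat h.symm).IsPath := by
    have hw : G.Reachable u w := hv.trans h.reachable
    obtain ⟨p, hp⟩ := hw.exists_walk_length_eq_dist
    have := dist_le_dist_add_one_of_adj h.symm hw
    exact ⟨p, Walk.isPath_of_length_eq_dist _ (by simp only [Walk.length_concat]; omega)⟩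
  obtain ⟨p₁, hp₁⟩ := geodesic h₁ hd₁
  obtain ⟨p₂, hp₂⟩ := geodesic h₂ hd₂
  have := congrArg Subtype.val ((hG.subsingleton_path u v).elim ⟨_, hp₁⟩ ⟨_, hp₂⟩)
  exact (Walk.concat_inj this).1

end SimpleGraph

/-- The roots are the vertices with `parent q = none`; `rank` witnesses that the parent relation
is well founded. -/
structure RootedForest (Q : Type*) where
  parent : Q → Option Q
  rank : Q → ℕ
  rank_lt : ∀ {q p}, parent q = some p → rank p < rank q

namespace RootedForest

variable {Q : Type*} (F : RootedForest Q)

def graph : SimpleGraph Q := SimpleGraph.fromRel fun q p => F.parent q = some p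

lemma parent_ne_self (q : Q) : F.parent q ≠ some q :=
  fun h => (F.rank_lt h).false

lemma graph_adj {q₁ q₂ : Q} :
    F.graph.Adj q₁ q₂ ↔ F.parent q₁ = some q₂ ∨ F.parent q₂ = some q₁ := by
  rw [graph, SimpleGraph.fromRel_adj, and_iff_right_iff_imp]
  rintro (h | h) rfl <;> exact F.parent_ne_self _ h

end RootedForest

namespace SimpleGraph

variable {Q : Type*} {J : SimpleGraph Q}

/-- Root every component of a forest at a chosen vertex; the parent of a vertex is its unique
neighbour closer to the root. -/
lemma IsAcyclic.exists_rootedForest (hJ : J.IsAcyclic) : ∃ F : RootedForest Q, F.graph = J := by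
  classical
  let root (q : Q) : Q := (J.connectedComponentMk q).out
  have reachable_root (q : Q) : J.Reachable (root q) q :=
    ConnectedComponent.exact (J.connectedComponentMk q).out_eq
  have root_eq {a b : Q} (h : J.Adj a b) : root a = root b := by
    simp only [root, ConnectedComponent.sound h.reachable]
  let rank (q : Q) : ℕ := J.dist (root q) q
  let Closer (q p : Q) : Prop := J.Adj q p ∧ J.dist (root q) p < rank q
  let parent (q : Q) : Option Q := if h : ∃ p, Closer q p then some h.choose else none
  have parent_eq_some {q p : Q} : parent q = some p ↔ Closer q p := by
    by_cases h : ∃ p, Closer q p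
    · simp only [parent, dif_pos h, Option.some.injEq]
      exact ⟨fun hp => hp ▸ h.choose_spec, fun hp => hJ.eq_of_adj_of_dist_lt
        h.choose_spec.1 hp.1 h.choose_spec.2 hp.2⟩
    · simp only [parent, dif_neg h, reduceCtorEq, false_iff]
      exact fun hp => h ⟨p, hp⟩
  refine ⟨⟨parent, rank, fun h => ?_⟩, ?_⟩
  · obtain ⟨hadj, hlt⟩ := parent_eq_some.mp h
    simpa only [rank, root_eq hadj] using hlt
  · ext a b
    rw [RootedForest.graph_adj]
    simp only [parent_eq_some, Closer, rank]
    refine ⟨fun h => h.elim And.left (fun h => h.1.symm), fun hab => ?_⟩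
    rcases hJ.dist_eq_dist_add_one_of_adj_of_reachable (root a) hab (reachable_root a) with h | h
    · exact Or.inl ⟨hab, by omega⟩
    · exact Or.inr ⟨hab.symm, by rw [← root_eq hab]; omega⟩

end SimpleGraph

lemma Nat.div_succ_eq_iff {i c k : ℕ} :
    i / (k + 1) = c ↔ c * (k + 1) ≤ i ∧ i ≤ c * (k + 1) + k := by
  rw [Nat.div_eq_iff k.succ_pos, Nat.succ_eq_add_one]
  omega

/-- `chain t i` is the `i`-th vertex from the top of the chain owned by `t`; the chain owned by
`none` hangs from the root. -/
inductive LimbVertex (Q : Type) (N : ℕ) where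
  | root
  | chain (t : Option Q) (i : Fin N)
  | leaf (q : Q)
  deriving Fintype

noncomputable section

namespace RootedForest

variable {Q : Type} [Fintype Q] (F : RootedForest Q) (k : ℕ)

local notation "n" => Fintype.card Q
local notation "e" => Fintype.equivFin Q
local notation "Vtx" => LimbVertex Q (Fintype.card Q * (k + 1))

lemma segment_index_lt (q : Q) {j : ℕ} (hj : j ≤ k) : e q * (k + 1) + j < n * (k + 1) := by
  have := (e q).isLt
  nlinarith

lemma chainLength_pos (q : Q) : 0 < n * (k + 1) := by
  have := segment_index_lt k q (Nat.zero_le k)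
  omega

variable {k} in
def segVertex (t : Option Q) (q : Q) (j : ℕ) (hj : j ≤ k) : Vtx :=
  .chain t ⟨e q * (k + 1) + j, segment_index_lt k q hj⟩

def chainAnchor : Option Q → Vtx
  | none => .root
  | some q => segVertex (F.parent q) q k le_rfl

def anchorDepth : Option Q → ℕ
  | none => 0
  | some q => anchorDepth (F.parent q) + e q * (k + 1) + k + 1
termination_by t => t.elim 0 (F.rank · + 1)
decreasing_by
  cases h : F.parent q with
  | none => simp
  | some p => simpa using F.rank_lt h

def limbParent : Vtx → Vtx
  | .root => .root
  | .chain t i => if h : (i : ℕ) = 0 then F.chainAnchor k t else .chain t ⟨i - 1, by omega⟩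
  | .leaf q => .chain (some q) ⟨n * (k + 1) - 1, by have := chainLength_pos k q; omega⟩

def limbDepth : Vtx → ℕ
  | .root => 0
  | .chain t i => F.anchorDepth k t + i + 1
  | .leaf q => F.anchorDepth k (some q) + n * (k + 1) + 1

def limbStart (q : Q) : Vtx := segVertex (F.parent q) q 0 (Nat.zero_le k)

lemma anchorDepth_some (q : Q) :
    F.anchorDepth k (some q) = F.anchorDepth k (F.parent q) + e q * (k + 1) + k + 1 := by
  rw [anchorDepth]

lemma limbDepth_chainAnchor (t : Option Q) :
    F.limbDepth k (F.chainAnchor k t) = F.anchorDepth k t := by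
  cases t with
  | none => simp [chainAnchor, limbDepth, anchorDepth]
  | some q => simp [chainAnchor, segVertex, limbDepth, anchorDepth_some, add_assoc]

lemma isDepthFunction : IsDepthFunction (F.limbParent k) .root (F.limbDepth k) where
  map_root := rfl
  depth_eq_zero_iff v := by cases v <;> simp [limbDepth]
  depth_map_add_one v hv := by
    cases v with
    | root => exact absurd rfl hv
    | chain t i =>
      by_cases hi : (i : ℕ) = 0
      · rw [limbParent, dif_pos hi, limbDepth_chainAnchor]
        simp [limbDepth, hi]
      · simp only [limbParent, hi, dite_false, limbDepth]
        omega
    | leaf q =>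
      have := chainLength_pos k q
      simp only [limbParent, limbDepth, anchorDepth_some]
      omega

def OnLimb (q : Q) : Vtx → Prop
  | .root => False
  | .chain t i => t = some q ∨ (t = F.parent q ∧ (i : ℕ) / (k + 1) = e q)
  | .leaf q' => q' = q

lemma onLimb_segVertex {q : Q} {j : ℕ} (hj : j ≤ k) :
    F.OnLimb k q (segVertex (F.parent q) q j hj) :=
  Or.inr ⟨rfl, Nat.div_succ_eq_iff.mpr (by simp only; omega)⟩

lemma limbDepth_le_of_onLimb {q : Q} {x : Vtx} (hx : F.OnLimb k q x) :
    F.limbDepth k (F.limbStart k q) ≤ F.limbDepth k x ∧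
      F.limbDepth k x ≤ F.limbDepth k (.leaf q) := by
  have hT := F.anchorDepth_some k q
  rcases x with _ | ⟨t, i⟩ | q'
  · exact hx.elim
  · have := i.isLt
    rcases hx with rfl | ⟨rfl, hi⟩
    · simp only [limbDepth, limbStart, segVertex]
      omega
    · have := Nat.div_succ_eq_iff.mp hi
      simp only [limbDepth, limbStart, segVertex]
      omega
  · obtain rfl : q' = q := hx
    simp only [limbDepth, limbStart, segVertex]
    omega

lemma limbDepth_injOn (q : Q) : Set.InjOn (F.limbDepth k) {x | F.OnLimb k q x} := by
  -- the leaf, the chain of `some q` and the segment of `q` lie in disjoint bands of depths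
  have hT := F.anchorDepth_some k q
  rintro (_ | ⟨t, i⟩ | q₁) hx (_ | ⟨t', i'⟩ | q₂) hy hxy <;>
    simp only [Set.mem_ofPred_eq, OnLimb] at hx hy <;>
    (try rcases hx with rfl | ⟨rfl, hx⟩) <;> (try rcases hy with rfl | ⟨rfl, hy⟩) <;>
    simp only [limbDepth, Nat.div_succ_eq_iff, LimbVertex.chain.injEq,
      Fin.ext_iff, true_and] at * <;>
    omega

lemma onLimb_map {q : Q} {x : Vtx} (hx : F.OnLimb k q x) (hne : x ≠ F.limbStart k q) :
    F.OnLimb k q (F.limbParent k x) := by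
  rcases x with _ | ⟨t, i⟩ | q'
  · exact hx.elim
  · rcases hx with rfl | ⟨rfl, hi⟩
    · by_cases hi0 : (i : ℕ) = 0
      · rw [limbParent, dif_pos hi0]
        exact F.onLimb_segVertex k le_rfl
      · rw [limbParent, dif_neg hi0]
        exact Or.inl rfl
    · have hi' := Nat.div_succ_eq_iff.mp hi
      have hgt : e q * (k + 1) < i := by
        refine lt_of_le_of_ne hi'.1 fun h => hne ?_
        simp [limbStart, segVertex, h]
      rw [limbParent, dif_neg (by omega)]
      exact Or.inr ⟨rfl, Nat.div_succ_eq_iff.mpr (by simp only; omega)⟩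
  · obtain rfl : q' = q := hx
    exact Or.inl rfl

lemma limbStart_eq_iterate_and_onLimb_iff (q : Q) :
    (F.limbParent k)^[F.limbDepth k (.leaf q) - F.limbDepth k (F.limbStart k q)] (.leaf q) =
        F.limbStart k q ∧
      ∀ x, F.OnLimb k q x ↔
        ∃ i ≤ F.limbDepth k (.leaf q) - F.limbDepth k (F.limbStart k q),
          (F.limbParent k)^[i] (.leaf q) = x :=
  (F.isDepthFunction k).eq_iterate_of_mem (S := {x | F.OnLimb k q x}) rfl
    (F.onLimb_segVertex k (Nat.zero_le k)) (fun _ => F.onLimb_map k)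
    (fun _ => F.limbDepth_le_of_onLimb k) (F.limbDepth_injOn k q)

lemma onTreePath_iff_onLimb (q : Q) (x : Vtx) :
    OnTreePath (parentGraph (F.limbParent k)) (.leaf q) (F.limbStart k q) x ↔ F.OnLimb k q x := by
  obtain ⟨hstart, hlimb⟩ := F.limbStart_eq_iterate_and_onLimb_iff k q
  rw [hlimb]
  conv_lhs => rw [← hstart]
  exact (F.isDepthFunction k).onTreePath_iterate_iff (Nat.sub_le _ _)

lemma limbParent_ne_leaf (x : Vtx) (q : Q) : F.limbParent k x ≠ .leaf q := by
  rcases x with _ | ⟨t, i⟩ | q'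
  · simp [limbParent]
  · rcases t with _ | p <;> by_cases hi : (i : ℕ) = 0 <;>
      simp [limbParent, chainAnchor, segVertex, hi]
  · simp [limbParent]

lemma limbStart_ne_leaf (q q' : Q) : F.limbStart k q ≠ .leaf q' := by
  simp [limbStart, segVertex]

lemma isLimb (q : Q) :
    IsLimb (parentGraph (F.limbParent k)) .root (.leaf q) (F.limbStart k q) := by
  obtain ⟨hstart, -⟩ := F.limbStart_eq_iterate_and_onLimb_iff k q
  refine ⟨(F.isDepthFunction k).isRootedLeaf_of_forall_ne fun x => F.limbParent_ne_leaf k x q,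
    nofun, ?_, F.limbStart_ne_leaf k q q⟩
  rw [← hstart]
  exact (F.isDepthFunction k).isAncestor_iterate (Nat.sub_le _ _)

lemma graph_adj_of_onLimb {q₁ q₂ : Q} (hne : q₁ ≠ q₂) {x : Vtx}
    (h₁ : F.OnLimb k q₁ x) (h₂ : F.OnLimb k q₂ x) : F.graph.Adj q₁ q₂ := by
  rw [graph_adj]
  rcases x with _ | ⟨t, i⟩ | q'
  · exact h₁.elim
  · rcases h₁ with rfl | ⟨rfl, h₁⟩ <;> rcases h₂ with h₂ | ⟨h₂, h₂'⟩
    · exact absurd (Option.some_injective _ h₂) hne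
    · exact Or.inr h₂.symm
    · exact Or.inl h₂
    · exact absurd ((e).injective (Fin.ext (h₁.symm.trans h₂'))) hne
  · exact absurd (h₁.symm.trans h₂) hne

lemma graph_adj_of_overlapRel (hk : 1 ≤ k) {q₁ q₂ : Q} (hne : q₁ ≠ q₂)
    (h : OverlapRel (parentGraph (F.limbParent k)) .leaf (F.limbStart k) k q₁ q₂) :
    F.graph.Adj q₁ q₂ := by
  obtain ⟨x, ⟨h₁, -⟩, ⟨h₂, -⟩, -⟩ :=
    Set.nonempty_of_ncard_ne_zero (Nat.one_le_iff_ne_zero.mp (hk.trans h))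
  rw [onTreePath_iff_onLimb] at h₁ h₂
  exact F.graph_adj_of_onLimb k hne h₁ h₂

/-- The `k` vertices of the segment of `q` in the chain of its parent `p`, below its top, lie on
the limbs of `p` and `q` only. -/
lemma overlapRel_of_parent_eq_some {p q : Q} (h : F.parent q = some p) :
    OverlapRel (parentGraph (F.limbParent k)) .leaf (F.limbStart k) k p q := by
  let g (j : Fin k) : Vtx := segVertex (some p) q (j + 1) j.isLt
  have hg : Function.Injective g := fun j j' hjj' => by
    simpa [g, segVertex, Fin.ext_iff] using hjj'
  have hsub (j : Fin k) : g j ∈ {x | InLimbInterior (parentGraph (F.limbParent k)) (.leaf p)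
      (F.limbStart k p) x ∧ InLimbInterior (parentGraph (F.limbParent k)) (.leaf q)
      (F.limbStart k q) x ∧ ∀ q', q' ≠ p → q' ≠ q →
        ¬ OnTreePath (parentGraph (F.limbParent k)) (.leaf q') (F.limbStart k q') x} := by
    simp only [InLimbInterior, onTreePath_iff_onLimb]
    have hq : F.OnLimb k q (g j) := by
      simp only [g]
      rw [← h]
      exact F.onLimb_segVertex k j.isLt
    refine ⟨⟨Or.inl rfl, nofun, ?_⟩, ⟨hq, nofun, ?_⟩, ?_⟩
    · simpa [g, limbStart, segVertex] using fun h' => absurd h'.symm (F.parent_ne_self p)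
    · simp [g, limbStart, segVertex, h]
    · rintro q' hp hq (h' | ⟨-, h'⟩)
      · exact hp (Option.some_injective _ h').symm
      · refine hq ((e).injective (Fin.ext (h'.symm.trans ?_)))
        exact Nat.div_succ_eq_iff.mpr (by simp only; omega)
  calc k = (Set.univ : Set (Fin k)).ncard := by simp
    _ ≤ _ := Set.ncard_le_ncard_of_injOn g (fun j _ => hsub j) hg.injOn

lemma overlapGraph_adj_iff (hk : 1 ≤ k) (q₁ q₂ : Q) :
    (SimpleGraph.fromRel (OverlapRel (parentGraph (F.limbParent k)) .leaf (F.limbStart k) k)).Adj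
      q₁ q₂ ↔ F.graph.Adj q₁ q₂ := by
  rw [SimpleGraph.fromRel_adj]
  refine ⟨fun ⟨hne, h⟩ => h.elim (F.graph_adj_of_overlapRel k hk hne)
    (fun h => (F.graph_adj_of_overlapRel k hk hne.symm h).symm), fun h => ⟨h.ne, ?_⟩⟩
  rcases (F.graph_adj).mp h with h | h
  · exact Or.inr (F.overlapRel_of_parent_eq_some k h)
  · exact Or.inl (F.overlapRel_of_parent_eq_some k h)

lemma limbStart_injective : Function.Injective (F.limbStart k) := fun q q' h => by
  simp only [limbStart, segVertex, LimbVertex.chain.injEq, Fin.mk.injEq, add_zero] at h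
  exact (e).injective (Fin.ext (Nat.eq_of_mul_eq_mul_right k.succ_pos h.2))

end RootedForest

end

/-- Theorem 6.1, getforest: for every finite forest `J` and every `k ≥ 1`
there are a rooted tree `(T, r)` and a family of limbs, indexed by the vertices of `J`, no
two of which share an end, whose `k`-overlap graph is `J` (via the identity on vertices). -/
theorem stmt_6 {Q : Type} [Fintype Q] (J : SimpleGraph Q) (hJ : J.IsAcyclic)
    (k : ℕ) (hk : 1 ≤ k) :
    ∃ (V : Type) (G : SimpleGraph V) (r : V), G.IsTree ∧
      ∃ leaf start : Q → V,
        (∀ q, IsLimb G r (leaf q) (start q)) ∧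
        (∀ q q', q ≠ q' → leaf q ≠ leaf q' ∧ leaf q ≠ start q' ∧
          start q ≠ leaf q' ∧ start q ≠ start q') ∧
        (∀ q₁ q₂, (SimpleGraph.fromRel (OverlapRel G leaf start k)).Adj q₁ q₂ ↔
          J.Adj q₁ q₂) := by
  obtain ⟨F, rfl⟩ := hJ.exists_rootedForest
  refine ⟨_, parentGraph (F.limbParent k), .root, (F.isDepthFunction k).isTree,
    .leaf, F.limbStart k, F.isLimb k, fun q q' hne => ?_, F.overlapGraph_adj_iff k hk⟩
  exact ⟨fun h => hne (LimbVertex.leaf.inj h), (F.limbStart_ne_leaf k q' q).symm,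
    F.limbStart_ne_leaf k q q', (F.limbStart_injective k).ne hne⟩
end

section
/- Let G be a graph, ρ ≥ 0 an integer, and suppose χ^ρ(G) ≤ τ, where χ^ρ(G) denotes the maximum over vertices v of the chromatic number of the subgraph induced on the ball of radius ρ about v. Let A ⊆ V(G) induce a connected subgraph with χ(A) > ℓτ for some integer ℓ ≥ 1. Then there exist vertices v_1, ..., v_ℓ ∈ A that pairwise have G-distance at least ρ + 1. -/
private lemma stmt9_aux {V : Type} (G : SimpleGraph V) {ρ τ : ℕ}
    (c : ∀ v : V, (G.induce {u | G.dist v u ≤ ρ}).Coloring (Fin τ))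
    {s s' a b : V} (hs : s = s') (ha : G.dist s a ≤ ρ) (hb : G.dist s' b ≤ ρ)
    (hadj : G.Adj a b) : (c s ⟨a, ha⟩ : Fin τ) ≠ c s' ⟨b, hb⟩ := by
  subst hs
  exact (c s).valid hadj

/-- If `χ^ρ(G) ≤ τ` and `A` induces a connected subgraph with `χ(A) > ℓτ`
(`ℓ ≥ 1`), then there are `ℓ` vertices of `A` pairwise at `G`-distance at least `ρ + 1`. -/
theorem stmt_9 {V : Type} (G : SimpleGraph V) (ρ τ ℓ : ℕ) (hℓ : 1 ≤ ℓ)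
    (hball : ∀ v : V, (G.induce {u | G.dist v u ≤ ρ}).chromaticNumber ≤ (τ : ℕ∞))
    (A : Set V) (hconn : (G.induce A).Connected)
    (hchi : (ℓ * τ : ℕ) < (G.induce A).chromaticNumber) :
    ∃ v : Fin ℓ → V, (∀ i, v i ∈ A) ∧
      ∀ i j, i ≠ j → ρ + 1 ≤ G.dist (v i) (v j) := by
  classical
  set spread : Finset V → Prop := fun S => (↑S : Set V) ⊆ A ∧
    ∀ x ∈ S, ∀ y ∈ S, x ≠ y → ρ + 1 ≤ G.dist x y with hspread_def
  by_cases hex : ∃ S : Finset V, spread S ∧ S.card = ℓ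
  · obtain ⟨S, ⟨hSA, hSd⟩, hcard⟩ := hex
    refine ⟨fun i => (S.equivFin.symm (Fin.cast hcard.symm i) : V), ?_, ?_⟩
    · intro i; exact hSA (S.equivFin.symm _).2
    · intro i j hij
      refine hSd _ (S.equivFin.symm _).2 _ (S.equivFin.symm _).2 ?_
      intro h
      apply hij
      have h1 := S.equivFin.symm.injective (Subtype.ext h)
      exact Fin.ext (congrArg Fin.val h1 :)
  · exfalso
    -- every spread set has card ≤ ℓ
    have hbound : ∀ T : Finset V, spread T → T.card ≤ ℓ := by
      intro T hT
      by_contra hlt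
      push_neg at hlt
      obtain ⟨t, hts, htc⟩ := Finset.exists_subset_card_eq (s := T) (n := ℓ) hlt.le
      exact hex ⟨t, ⟨fun x hx => hT.1 (hts hx),
        fun x hx y hy hxy => hT.2 x (hts hx) y (hts hy) hxy⟩, htc⟩
    obtain ⟨a₀, ha₀⟩ := hconn.nonempty
    have hP1 : spread {a₀} ∧ ({a₀} : Finset V).card = 1 :=
      ⟨⟨by simpa using ha₀, by intro x hx y hy hxy; simp_all⟩, rfl⟩
    set P : ℕ → Prop := fun n => ∃ S : Finset V, spread S ∧ S.card = n with hPdef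
    set n := Nat.findGreatest P ℓ with hn
    obtain ⟨S, hS, hcard⟩ : P n := Nat.findGreatest_spec hℓ ⟨{a₀}, hP1⟩
    have hmax : ∀ T : Finset V, spread T → T.card ≤ n := fun T hT =>
      Nat.le_findGreatest (hbound T hT) ⟨T, hT, rfl⟩
    -- covering
    have cover : ∀ a ∈ A, ∃ s ∈ S, G.dist s a ≤ ρ := by
      intro a ha
      by_contra hc
      push_neg at hc
      have haS : a ∉ S := by
        intro haS
        have := hc a haS
        simp [SimpleGraph.dist_self] at this
      have hins : spread (insert a S) := by
        constructor
        · intro x hx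
          rcases Finset.mem_insert.mp hx with rfl | hx
          · exact ha
          · exact hS.1 hx
        · intro x hx y hy hxy
          rcases Finset.mem_insert.mp hx with hxa | hxS
          · rcases Finset.mem_insert.mp hy with hya | hyS
            · exact absurd (hxa.trans hya.symm) hxy
            · rw [hxa, G.dist_comm]; exact hc y hyS
          · rcases Finset.mem_insert.mp hy with hya | hyS
            · rw [hya]; exact hc x hxS
            · exact hS.2 x hxS y hyS hxy
      have := hmax _ hins
      rw [Finset.card_insert_of_notMem haS, hcard] at this
      omega
    choose g hg1 hg2 using cover
    have hcol : ∀ v : V, (G.induce {u | G.dist v u ≤ ρ}).Colorable τ := fun v =>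
      (SimpleGraph.chromaticNumber_le_iff_colorable.mp (hball v))
    have c : ∀ v : V, (G.induce {u | G.dist v u ≤ ρ}).Coloring (Fin τ) := fun v =>
      (hcol v).some
    have C : (G.induce A).Coloring (↥S × Fin τ) := by
      refine SimpleGraph.Coloring.mk
        (fun a => (⟨g a.1 a.2, hg1 a.1 a.2⟩, c (g a.1 a.2) ⟨a.1, hg2 a.1 a.2⟩)) ?_
      intro a b hadj h
      have h1 : g a.1 a.2 = g b.1 b.2 := congrArg (fun p => (p.1 : V)) h
      have h2 := congrArg Prod.snd h
      exact stmt9_aux G c h1 (hg2 a.1 a.2) (hg2 b.1 b.2) hadj h2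
    have hcolA : (G.induce A).Colorable (n * τ) := by
      have := C.colorable
      rwa [Fintype.card_prod, Fintype.card_coe, Fintype.card_fin, hcard] at this
    have hle := hcolA.chromaticNumber_le
    have hnl : n ≤ ℓ := Nat.findGreatest_le ℓ
    have : ((n * τ : ℕ) : ℕ∞) ≤ ((ℓ * τ : ℕ) : ℕ∞) :=
      Nat.cast_le.mpr (Nat.mul_le_mul_right τ hnl)
    exact hchi.not_ge (hle.trans this)
end

section
/- Let G be a graph, let B_1, ..., B_{h−1} be subgraphs of G, and let x_1, ..., x_h be vertices, forming a banana path: each B_i is an induced banana in G with ends x_i, x_{i+1}, the bananas are pairwise orthogonal, and the x_i pairwise have distance at least n ≥ 3. Suppose additionally each banana has thickness n − 1 and each of its constituent paths has length at least n − 1. Then the union of the B_i is an induced subgraph of G isomorphic to a graph obtained from a path with h vertices by replacing each edge by a banana of thickness n − 1 in which every path has length at least n − 1. -/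
/-- `H` is (exactly) a graph obtained from a path with `m + 1` vertices `y 0, …, y m` by
replacing each edge by a banana of thickness `t` each of whose constituent paths has length
at least `ℓ`: there are internally disjoint paths realising the bananas, distinct bananas
meet only when consecutive and then only in their common end, and every vertex and every
edge of `H` lies on one of the paths. -/
def BananaPathShape {W : Type} (H : SimpleGraph W) (m t ℓ : ℕ) : Prop :=
  ∃ (y : Fin (m + 1) → W)
    (P : (i : Fin m) → Fin t → H.Walk (y i.castSucc) (y i.succ)),
    Function.Injective y ∧
    (∀ i j, (P i j).IsPath ∧ ℓ ≤ (P i j).length) ∧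
    (∀ i j j', j ≠ j' → ∀ v, v ∈ (P i j).support → v ∈ (P i j').support →
      v = y i.castSucc ∨ v = y i.succ) ∧
    (∀ i i', i ≠ i' → ∀ v, (∃ j, v ∈ (P i j).support) → (∃ j, v ∈ (P i' j).support) →
      (i.succ = i'.castSucc ∧ v = y i.succ) ∨ (i'.succ = i.castSucc ∧ v = y i'.succ)) ∧
    (∀ w : W, ∃ i j, w ∈ (P i j).support) ∧
    (∀ u v, H.Adj u v → ∃ i j, s(u, v) ∈ (P i j).edges)

/-! The union of the bananas is induced because each banana is, and by orthogonality an edge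
between two different bananas has an end in both of them, so it lies in one banana. The
distance condition makes the ends `x a` distinct, and orthogonality then forces two bananas
to meet only when consecutive, in their shared end. -/

lemma Fin.consecutive_of_ends_eq {α : Type} {m : ℕ} {x : Fin (m + 1) → α}
    (hx : Function.Injective x) {i i' : Fin m} (hii : i ≠ i') {v : α}
    (hv : v = x i.castSucc ∨ v = x i.succ) (hv' : v = x i'.castSucc ∨ v = x i'.succ) :
    (i.succ = i'.castSucc ∧ v = x i.succ) ∨ (i'.succ = i.castSucc ∧ v = x i'.succ) := by
  rcases hv with rfl | rfl <;> rcases hv' with h | h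
  · exact absurd (Fin.castSucc_injective m (hx h)) hii
  · exact Or.inr ⟨(hx h).symm, h⟩
  · exact Or.inl ⟨hx h, rfl⟩
  · exact absurd (Fin.succ_injective m (hx h)) hii

namespace SimpleGraph

namespace Walk

variable {V : Type} {G : SimpleGraph V} {s : Set V}

lemma length_induce : ∀ {u v : V} (w : G.Walk u v) (hw : ∀ x ∈ w.support, x ∈ s),
    (w.induce s hw).length = w.length
  | _, _, .nil, _ => rfl
  | _, _, .cons _ w, _ => by simp [length_induce w]

lemma map_edges_induce : ∀ {u v : V} (w : G.Walk u v) (hw : ∀ x ∈ w.support, x ∈ s),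
    (w.induce s hw).edges.map (Sym2.map Subtype.val) = w.edges
  | _, _, .nil, _ => rfl
  | _, _, .cons _ w, _ => by simp [map_edges_induce w]

lemma IsPath.induce {u v : V} {w : G.Walk u v} (hp : w.IsPath) (hw : ∀ x ∈ w.support, x ∈ s) :
    (w.induce s hw).IsPath :=
  IsPath.of_map (f := (Embedding.induce s).toHom) (by rwa [map_induce])

lemma mem_support_induce_iff {u v : V} (w : G.Walk u v) (hw : ∀ x ∈ w.support, x ∈ s) (a : s) :
    a ∈ (w.induce s hw).support ↔ (a : V) ∈ w.support := by
  rw [support_induce, List.mem_attachWith]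

lemma mem_edges_induce_iff {u v : V} (w : G.Walk u v) (hw : ∀ x ∈ w.support, x ∈ s) (a b : s) :
    s(a, b) ∈ (w.induce s hw).edges ↔ s((a : V), (b : V)) ∈ w.edges := by
  rw [← map_edges_induce w hw, ← Sym2.map_mk,
    List.mem_map_of_injective (Sym2.map.injective Subtype.val_injective)]

end Walk

variable {V ι κ : Type} {G : SimpleGraph V}

lemma injective_of_le_dist {n : ℕ} (hn : 0 < n) {x : ι → V}
    (hx : ∀ a b, a ≠ b → n ≤ G.dist (x a) (x b)) : Function.Injective x := by
  intro a b hab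
  by_contra hne
  have := hx a b hne
  rw [hab, dist_self] at this
  omega

lemma exists_edges_of_adj_of_orthogonal {a b : ι → V} (P : (i : ι) → κ → G.Walk (a i) (b i))
    (hinduced : ∀ i, ∀ u v, (∃ j, u ∈ (P i j).support) → (∃ j, v ∈ (P i j).support) →
      G.Adj u v → ∃ j, s(u, v) ∈ (P i j).edges)
    (horth : ∀ i i', i ≠ i' → ∀ u v, (∃ j, u ∈ (P i j).support) →
      (∃ j, v ∈ (P i' j).support) → G.Adj u v →
      ∃ w, (∃ j, w ∈ (P i j).support) ∧ (∃ j, w ∈ (P i' j).support) ∧ (u = w ∨ v = w))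
    {u v : V} (hu : ∃ i j, u ∈ (P i j).support) (hv : ∃ i j, v ∈ (P i j).support)
    (huv : G.Adj u v) : ∃ i j, s(u, v) ∈ (P i j).edges := by
  obtain ⟨i, hu⟩ := hu
  obtain ⟨i', hv⟩ := hv
  by_cases hii : i = i'
  · subst hii
    exact ⟨i, hinduced i u v hu hv huv⟩
  obtain ⟨w, hwi, hwi', rfl | rfl⟩ := horth i i' hii u v hu hv huv
  · exact ⟨i', hinduced i' u v hwi' hv huv⟩
  · exact ⟨i, hinduced i u v hu hwi huv⟩

lemma exists_mem_support_of_chain [Nonempty κ] {m : ℕ} (hm : 1 ≤ m) {x : Fin (m + 1) → V}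
    (P : (i : Fin m) → κ → G.Walk (x i.castSucc) (x i.succ))
    (a : Fin (m + 1)) : ∃ i j, x a ∈ (P i j).support := by
  obtain ⟨m, rfl⟩ := Nat.exists_eq_add_of_le' hm
  obtain ⟨i, rfl⟩ | rfl := a.eq_castSucc_or_eq_last
  · exact ⟨i, Classical.arbitrary κ, (P _ _).start_mem_support⟩
  · exact ⟨Fin.last m, Classical.arbitrary κ, Fin.succ_last m ▸ (P _ _).end_mem_support⟩

end SimpleGraph

open SimpleGraph

theorem bananaPathShape_induce {V : Type} {G : SimpleGraph V} {m t ℓ : ℕ}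
    {x : Fin (m + 1) → V} (hx : Function.Injective x)
    (P : (i : Fin m) → Fin t → G.Walk (x i.castSucc) (x i.succ))
    (hends : ∀ a, ∃ i j, x a ∈ (P i j).support)
    (hpath : ∀ i j, (P i j).IsPath ∧ ℓ ≤ (P i j).length)
    (hintdisj : ∀ i j j', j ≠ j' → ∀ v, v ∈ (P i j).support → v ∈ (P i j').support →
      v = x i.castSucc ∨ v = x i.succ)
    (hmeet : ∀ i i', i ≠ i' → ∀ v, (∃ j, v ∈ (P i j).support) → (∃ j, v ∈ (P i' j).support) →
      (v = x i.castSucc ∨ v = x i.succ) ∧ (v = x i'.castSucc ∨ v = x i'.succ))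
    (hinduced : ∀ u v, (∃ i j, u ∈ (P i j).support) → (∃ i j, v ∈ (P i j).support) →
      G.Adj u v → ∃ i j, s(u, v) ∈ (P i j).edges) :
    BananaPathShape (G.induce {w | ∃ i j, w ∈ (P i j).support}) m t ℓ := by
  set S : Set V := {w | ∃ i j, w ∈ (P i j).support}
  have hPS : ∀ i j, ∀ w ∈ (P i j).support, w ∈ S := fun i j _ hw => ⟨i, j, hw⟩
  refine ⟨fun a => ⟨x a, hends a⟩, fun i j => (P i j).induce S (hPS i j), ?_, ?_, ?_, ?_, ?_, ?_⟩
  · exact fun a b hab => hx (congrArg Subtype.val hab)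
  · intro i j
    exact ⟨(hpath i j).1.induce _, (Walk.length_induce _ _).symm ▸ (hpath i j).2⟩
  · intro i j j' hjj v hv hv'
    rw [Walk.mem_support_induce_iff] at hv hv'
    simpa only [Subtype.ext_iff] using hintdisj i j j' hjj v hv hv'
  · rintro i i' hii v ⟨j, hv⟩ ⟨j', hv'⟩
    rw [Walk.mem_support_induce_iff] at hv hv'
    obtain ⟨h, h'⟩ := hmeet i i' hii v ⟨j, hv⟩ ⟨j', hv'⟩
    simpa only [Subtype.ext_iff] using Fin.consecutive_of_ends_eq hx hii h h'
  · rintro ⟨w, i, j, hw⟩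
    exact ⟨i, j, (Walk.mem_support_induce_iff _ _ _).2 hw⟩
  · intro u v huv
    obtain ⟨i, j, he⟩ := hinduced u v u.2 v.2 huv
    exact ⟨i, j, (Walk.mem_edges_induce_iff _ _ _ _).2 he⟩

theorem stmt_17_general {V : Type} (G : SimpleGraph V) (m n : ℕ) (hm : 1 ≤ m) (hn : 3 ≤ n)
    (x : Fin (m + 1) → V)
    (hx : ∀ a b, a ≠ b → n ≤ G.dist (x a) (x b))
    (P : (i : Fin m) → Fin (n - 1) → G.Walk (x i.castSucc) (x i.succ))
    (hpath : ∀ i j, (P i j).IsPath ∧ n - 1 ≤ (P i j).length)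
    (hintdisj : ∀ i j j', j ≠ j' → ∀ v, v ∈ (P i j).support → v ∈ (P i j').support →
      v = x i.castSucc ∨ v = x i.succ)
    (hinduced : ∀ i, ∀ u v, (∃ j, u ∈ (P i j).support) → (∃ j, v ∈ (P i j).support) →
      G.Adj u v → ∃ j, s(u, v) ∈ (P i j).edges)
    (horth₁ : ∀ i i', i ≠ i' → ∀ v, (∃ j, v ∈ (P i j).support) →
      (∃ j, v ∈ (P i' j).support) →
      (v = x i.castSucc ∨ v = x i.succ) ∧ (v = x i'.castSucc ∨ v = x i'.succ))
    (horth₃ : ∀ i i', i ≠ i' → ∀ u v, (∃ j, u ∈ (P i j).support) →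
      (∃ j, v ∈ (P i' j).support) → G.Adj u v →
      ∃ w, (∃ j, w ∈ (P i j).support) ∧ (∃ j, w ∈ (P i' j).support) ∧
        (w = x i.castSucc ∨ w = x i.succ) ∧ (w = x i'.castSucc ∨ w = x i'.succ) ∧
        (u = w ∨ v = w)) :
    (∀ u v, (∃ i j, u ∈ (P i j).support) → (∃ i j, v ∈ (P i j).support) →
      G.Adj u v → ∃ i j, s(u, v) ∈ (P i j).edges) ∧
    BananaPathShape (G.induce {w | ∃ i j, w ∈ (P i j).support}) m (n - 1) (n - 1) := by
  have hinj : Function.Injective x := injective_of_le_dist (by omega) hx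
  have hthick : Nonempty (Fin (n - 1)) := ⟨⟨0, by omega⟩⟩
  have hunion : ∀ u v, (∃ i j, u ∈ (P i j).support) → (∃ i j, v ∈ (P i j).support) →
      G.Adj u v → ∃ i j, s(u, v) ∈ (P i j).edges := fun u v hu hv huv =>
    exists_edges_of_adj_of_orthogonal P hinduced
      (fun i i' hii u v hu hv huv =>
        let ⟨w, hwi, hwi', _, _, hw⟩ := horth₃ i i' hii u v hu hv huv
        ⟨w, hwi, hwi', hw⟩) hu hv huv
  exact ⟨hunion, bananaPathShape_induce hinj P (exists_mem_support_of_chain hm P) hpath hintdisj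
    horth₁ hunion⟩

/-- the union of a banana path — consecutive pairwise-orthogonal induced
bananas `B i` of thickness `n - 1`, with constituent paths of length at least `n - 1`,
joining vertices `x 0, …, x m` that pairwise have distance at least `n ≥ 3` — is an induced
subgraph of `G` isomorphic to a graph obtained from a path with `m + 1` vertices by
replacing each edge by a banana of thickness `n - 1` in which every path has length at
least `n - 1`. -/
theorem stmt_17 {V : Type} (G : SimpleGraph V) (m n : ℕ) (hm : 1 ≤ m) (hn : 3 ≤ n)
    (x : Fin (m + 1) → V)
    (hx : ∀ a b, a ≠ b → n ≤ G.dist (x a) (x b))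
    (P : (i : Fin m) → Fin (n - 1) → G.Walk (x i.castSucc) (x i.succ))
    (hpath : ∀ i j, (P i j).IsPath ∧ n - 1 ≤ (P i j).length)
    (hintdisj : ∀ i j j', j ≠ j' → ∀ v, v ∈ (P i j).support → v ∈ (P i j').support →
      v = x i.castSucc ∨ v = x i.succ)
    (hinduced : ∀ i, ∀ u v, (∃ j, u ∈ (P i j).support) → (∃ j, v ∈ (P i j).support) →
      G.Adj u v → ∃ j, s(u, v) ∈ (P i j).edges)
    (horth₁ : ∀ i i', i ≠ i' → ∀ v, (∃ j, v ∈ (P i j).support) →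
      (∃ j, v ∈ (P i' j).support) →
      (v = x i.castSucc ∨ v = x i.succ) ∧ (v = x i'.castSucc ∨ v = x i'.succ))
    (horth₂ : ∀ i i', i ≠ i' → ∀ v w, (∃ j, v ∈ (P i j).support) →
      (∃ j, v ∈ (P i' j).support) → (∃ j, w ∈ (P i j).support) →
      (∃ j, w ∈ (P i' j).support) → v = w)
    (horth₃ : ∀ i i', i ≠ i' → ∀ u v, (∃ j, u ∈ (P i j).support) →
      (∃ j, v ∈ (P i' j).support) → G.Adj u v →
      ∃ w, (∃ j, w ∈ (P i j).support) ∧ (∃ j, w ∈ (P i' j).support) ∧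
        (w = x i.castSucc ∨ w = x i.succ) ∧ (w = x i'.castSucc ∨ w = x i'.succ) ∧
        (u = w ∨ v = w)) :
    (∀ u v, (∃ i j, u ∈ (P i j).support) → (∃ i j, v ∈ (P i j).support) →
      G.Adj u v → ∃ i j, s(u, v) ∈ (P i j).edges) ∧
    BananaPathShape (G.induce {w | ∃ i j, w ∈ (P i j).support}) m (n - 1) (n - 1) :=
  stmt_17_general G m n hm hn x hx P hpath hintdisj hinduced horth₁ horth₃
end
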